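/- arXiv:2203.02032 — 8 statements merged into one kernel-verified Lean document; each statement's English description precedes it below -/
import Mathlib

section
/- For every w ∈ 𝔽 with |w| > 1, the bounded weighted backward shift A_w on c₀ is chaotic: it possesses a hypercyclic vector and its set of periodic points is dense in c₀. -/
/-!
The weighted forward shift `S`, `(S y) (k + 1) = w⁻¹ • y k`, is a right inverse of `A` with
`‖S‖ ≤ ‖w‖⁻¹ < 1`, and `A ^ n` annihilates every truncated sequence; these are dense in `c₀`. For such an `x` and any
`y`, the vector `x + S ^ n y` tends to `x` while `A ^ n` maps it to `y`; so `A` is topologically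
transitive and, `c₀` being a separable Banach space, Birkhoff's transitivity theorem (Baire's
theorem applied to the sets of points whose orbit meets a basic open set) gives a hypercyclic
vector. If moreover `A ^ N y = 0`, the Neumann series `p = (1 - S ^ N)⁻¹ y = ∑ S ^ (N j) y`
satisfies `p = y + S ^ N p`, hence `A ^ N p = p`, and `p → y` as `N → ∞`.
-/

open Filter Topology Function TopologicalSpace Set
open scoped ZeroAtInfty

section Birkhoff

variable {X : Type*} [TopologicalSpace X] [BaireSpace X] [SecondCountableTopology X] {f : X → X}

theorem dense_setOf_denseRange_iterate (hf : Continuous f)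
    (htrans : ∀ U V : Set X, IsOpen U → U.Nonempty → IsOpen V → V.Nonempty →
      ∃ n, (U ∩ f^[n] ⁻¹' V).Nonempty) :
    Dense {x | DenseRange fun n => f^[n] x} := by
  have hopen (V) (hV : V ∈ countableBasis X) : IsOpen (⋃ n, f^[n] ⁻¹' V) :=
    isOpen_iUnion fun n => (isOpen_of_mem_countableBasis hV).preimage (hf.iterate n)
  have hdense (V) (hV : V ∈ countableBasis X) : Dense (⋃ n, f^[n] ⁻¹' V) := by
    refine dense_iff_inter_open.2 fun U hU hUne => ?_
    obtain ⟨n, x, hxU, hxV⟩ := htrans U V hU hUne (isOpen_of_mem_countableBasis hV)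
      (nonempty_of_mem_countableBasis hV)
    exact ⟨x, hxU, mem_iUnion.2 ⟨n, hxV⟩⟩
  refine (dense_biInter_of_isOpen hopen (countable_countableBasis X) hdense).mono fun x hx => ?_
  refine (isBasis_countableBasis X).dense_iff.2 fun V hV _ => ?_
  obtain ⟨n, hn⟩ := mem_iUnion.1 (mem_iInter₂.1 hx V hV)
  exact ⟨_, hn, n, rfl⟩

end Birkhoff

section ChaosCriterion

variable {𝕜 X : Type*} [NontriviallyNormedField 𝕜] [NormedAddCommGroup X] [NormedSpace 𝕜 X]
  {T S : X →L[𝕜] X}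

theorem ContinuousLinearMap.exists_inter_preimage_pow_nonempty (hTS : T * S = 1)
    (hS : Tendsto (fun n : ℕ => S ^ n) atTop (𝓝 0))
    (hD : Dense {x | ∀ᶠ n in atTop, (T ^ n) x = 0}) {U V : Set X} (hU : IsOpen U)
    (hUne : U.Nonempty) (hVne : V.Nonempty) :
    ∃ n : ℕ, (U ∩ (T ^ n) ⁻¹' V).Nonempty := by
  obtain ⟨x, hxU, hx⟩ := hD.inter_open_nonempty U hU hUne
  obtain ⟨y, hy⟩ := hVne
  have hSy : Tendsto (fun n : ℕ => x + (S ^ n) y) atTop (𝓝 x) := by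
    simpa using tendsto_const_nhds.add
      (((ContinuousLinearMap.apply 𝕜 X y).continuous.tendsto 0).comp hS)
  obtain ⟨n, hxn, hTx⟩ := ((hSy.eventually (hU.mem_nhds hxU)).and hx).exists
  refine ⟨n, x + (S ^ n) y, hxn, ?_⟩
  rw [mem_preimage, map_add, hTx, zero_add, ← mul_apply_eq_comp,
    pow_mul_pow_eq_one n hTS, one_apply_eq_self]
  exact hy

theorem ContinuousLinearMap.dense_periodicPts [CompleteSpace X] (hTS : T * S = 1)
    (hS : Tendsto (fun n : ℕ => S ^ n) atTop (𝓝 0))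
    (hD : Dense {x | ∀ᶠ n in atTop, (T ^ n) x = 0}) :
    Dense (periodicPts T) := by
  refine dense_closure.1 (hD.mono fun y hy => ?_)
  have hinv : Tendsto (fun N : ℕ => Ring.inverse (1 - S ^ N)) atTop (𝓝 1) := by
    have h1 : Tendsto (fun N : ℕ => 1 - S ^ N) atTop (𝓝 ((1 : (X →L[𝕜] X)ˣ) : X →L[𝕜] X)) := by
      simpa using tendsto_const_nhds.sub hS
    simpa [comp_def] using (NormedRing.inverse_continuousAt 1).tendsto.comp h1
  have hp : Tendsto (fun N : ℕ => Ring.inverse (1 - S ^ N) y) atTop (𝓝 y) := by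
    simpa [comp_def] using
      ((ContinuousLinearMap.apply 𝕜 X y).continuous.tendsto 1).comp hinv
  refine mem_closure_of_tendsto hp ?_
  filter_upwards [hy, eventually_ge_atTop 1, hS.eventually (Metric.ball_mem_nhds 0 one_pos)]
    with N hTy hN hSN
  set p := Ring.inverse (1 - S ^ N) y
  have hp_eq : p = y + (S ^ N) p := by
    have := DFunLike.congr_fun (Ring.mul_inverse_cancel (1 - S ^ N)
      (isUnit_one_sub_of_norm_lt_one (by simpa using hSN))) y
    simp only [mul_apply_eq_comp, sub_apply, one_apply_eq_self] at this
    rw [← this, sub_add_cancel]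
  refine ⟨N, hN, ?_⟩
  rw [IsPeriodicPt, IsFixedPt, ← pow_apply_eq_iterate]
  conv_lhs => rw [hp_eq]
  rw [map_add, hTy, zero_add, ← mul_apply_eq_comp, pow_mul_pow_eq_one N hTS,
    one_apply_eq_self]

theorem ContinuousLinearMap.dense_setOf_denseRange_pow_apply [CompleteSpace X]
    [SeparableSpace X] (hTS : T * S = 1) (hS : Tendsto (fun n : ℕ => S ^ n) atTop (𝓝 0))
    (hD : Dense {x | ∀ᶠ n in atTop, (T ^ n) x = 0}) :
    Dense {x | DenseRange fun n : ℕ => (T ^ n) x} := by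
  simp only [pow_apply_eq_iterate]
  exact dense_setOf_denseRange_iterate T.continuous fun U V hU hUne _ hVne => by
    simpa only [FunLike.coe_pow_eq_iterate] using
      exists_inter_preimage_pow_nonempty hTS hS hD hU hUne hVne

end ChaosCriterion

namespace ZeroAtInftyContinuousMap

variable {E : Type*} [NormedAddCommGroup E]

theorem norm_apply_le {α : Type*} [TopologicalSpace α] (x : C₀(α, E)) (a : α) :
    ‖x a‖ ≤ ‖x‖ := by
  rw [← norm_toBCF_eq_norm]
  exact x.toBCF.norm_coe_le_norm a

theorem norm_le_iff {α : Type*} [TopologicalSpace α] {x : C₀(α, E)} {C : ℝ} (hC : 0 ≤ C) :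
    ‖x‖ ≤ C ↔ ∀ a, ‖x a‖ ≤ C := by
  rw [← norm_toBCF_eq_norm]
  exact BoundedContinuousFunction.norm_le hC

theorem tendsto_atTop_zero (x : C₀(ℕ, E)) : Tendsto x atTop (𝓝 0) :=
  cocompact_eq_atTop (α := ℕ) ▸ x.zero_at_infty'

def ofTendsto (f : ℕ → E) (hf : Tendsto f atTop (𝓝 0)) : C₀(ℕ, E) :=
  ⟨⟨f, continuous_of_discreteTopology⟩, cocompact_eq_atTop (α := ℕ) ▸ hf⟩

@[simp]
theorem ofTendsto_apply (f : ℕ → E) (hf : Tendsto f atTop (𝓝 0)) (k : ℕ) :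
    ofTendsto f hf k = f k :=
  rfl

def extendByZero {m : ℕ} (v : Fin m → E) : C₀(ℕ, E) :=
  ofTendsto (fun k => if h : k < m then v ⟨k, h⟩ else 0) <|
    tendsto_const_nhds.congr' <| (eventually_ge_atTop m).mono fun _ hk => by simp [hk.not_gt]

theorem lipschitzWith_extendByZero (m : ℕ) :
    LipschitzWith 1 (extendByZero : (Fin m → E) → C₀(ℕ, E)) := by
  refine LipschitzWith.of_dist_le_mul fun v v' => ?_
  rw [NNReal.coe_one, one_mul, dist_eq_norm, dist_eq_norm, norm_le_iff (norm_nonneg _)]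
  intro k
  simp only [extendByZero, coe_sub, Pi.sub_apply, ofTendsto_apply]
  split_ifs with hk
  · exact norm_le_pi_norm (v - v') ⟨k, hk⟩
  · simp

def truncate (x : C₀(ℕ, E)) (m : ℕ) : C₀(ℕ, E) :=
  extendByZero fun i : Fin m => x i

theorem truncate_apply_of_le (x : C₀(ℕ, E)) {m k : ℕ} (hk : m ≤ k) : x.truncate m k = 0 := by
  simp [truncate, extendByZero, hk.not_gt]

theorem norm_truncate_sub_le (x : C₀(ℕ, E)) {m : ℕ} {ε : ℝ} (hε : 0 ≤ ε)
    (hx : ∀ k, m ≤ k → ‖x k‖ ≤ ε) : ‖x.truncate m - x‖ ≤ ε := by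
  refine (norm_le_iff hε).2 fun k => ?_
  by_cases hk : k < m
  · simp [truncate, extendByZero, hk, hε]
  · simpa [truncate_apply_of_le x (not_lt.1 hk)] using hx k (not_lt.1 hk)

theorem tendsto_truncate (x : C₀(ℕ, E)) : Tendsto x.truncate atTop (𝓝 x) := by
  refine Metric.nhds_basis_closedBall.tendsto_right_iff.2 fun ε hε => ?_
  obtain ⟨N, hN⟩ := eventually_atTop.1
    (x.tendsto_atTop_zero.eventually (Metric.closedBall_mem_nhds 0 hε))
  filter_upwards [eventually_ge_atTop N] with m hm
  rw [Metric.mem_closedBall, dist_eq_norm]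
  exact x.norm_truncate_sub_le hε.le fun k hk => by simpa using hN k (hm.trans hk)

instance [SeparableSpace E] : SeparableSpace C₀(ℕ, E) := by
  rw [← isSeparable_univ_iff]
  have hsep : IsSeparable (⋃ m, range (extendByZero : (Fin m → E) → C₀(ℕ, E))) :=
    .iUnion fun m => isSeparable_range (lipschitzWith_extendByZero m).continuous
  refine hsep.closure.mono fun x _ => mem_closure_of_tendsto x.tendsto_truncate ?_
  exact Eventually.of_forall fun m => mem_iUnion.2 ⟨m, _, rfl⟩

variable {𝕜 : Type*} [NontriviallyNormedField 𝕜] [NormedSpace 𝕜 E]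

noncomputable def weightedBackwardShift (w : 𝕜) : C₀(ℕ, E) →L[𝕜] C₀(ℕ, E) :=
  LinearMap.mkContinuous
    { toFun := fun x => ofTendsto (fun k => w • x (k + 1))
        (by simpa using ((tendsto_add_atTop_iff_nat 1).2 x.tendsto_atTop_zero).const_smul w)
      map_add' := fun x y => ext fun k => smul_add w (x (k + 1)) (y (k + 1))
      map_smul' := fun c x => ext fun k => smul_comm w c (x (k + 1)) }
    ‖w‖ fun x => (norm_le_iff (by positivity)).2 fun k => by
      change ‖w • x (k + 1)‖ ≤ _
      rw [norm_smul]
      gcongr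
      exact x.norm_apply_le (k + 1)

noncomputable def weightedForwardShift (c : 𝕜) : C₀(ℕ, E) →L[𝕜] C₀(ℕ, E) :=
  LinearMap.mkContinuous
    { toFun := fun x => ofTendsto (fun k => Nat.casesOn k 0 fun j => c • x j)
        ((tendsto_add_atTop_iff_nat 1).1 (by simpa using x.tendsto_atTop_zero.const_smul c))
      map_add' := fun x y => ext fun k => by
        cases k
        exacts [(add_zero 0).symm, smul_add c (x _) (y _)]
      map_smul' := fun a x => ext fun k => by
        cases k
        exacts [(smul_zero a).symm, smul_comm c a (x _)] }
    ‖c‖ fun x => (norm_le_iff (by positivity)).2 fun k => by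
      cases k with
      | zero => exact norm_zero.trans_le (by positivity)
      | succ k =>
        change ‖c • x k‖ ≤ _
        rw [norm_smul]
        gcongr
        exact x.norm_apply_le k

@[simp]
theorem weightedBackwardShift_apply (w : 𝕜) (x : C₀(ℕ, E)) (k : ℕ) :
    weightedBackwardShift w x k = w • x (k + 1) :=
  rfl

theorem norm_weightedForwardShift_le (c : 𝕜) :
    ‖(weightedForwardShift c : C₀(ℕ, E) →L[𝕜] C₀(ℕ, E))‖ ≤ ‖c‖ :=
  LinearMap.mkContinuous_norm_le _ (norm_nonneg c) _

theorem weightedBackwardShift_mul_weightedForwardShift_inv {w : 𝕜} (hw : w ≠ 0) :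
    (weightedBackwardShift w * weightedForwardShift w⁻¹ : C₀(ℕ, E) →L[𝕜] C₀(ℕ, E)) = 1 := by
  ext x k
  simp [weightedForwardShift, smul_smul, hw]

theorem pow_weightedBackwardShift_apply (w : 𝕜) (n : ℕ) (x : C₀(ℕ, E)) (k : ℕ) :
    (weightedBackwardShift w ^ n) x k = w ^ n • x (k + n) := by
  induction n generalizing x with
  | zero => simp
  | succ n ih =>
    rw [pow_succ, mul_apply_eq_comp, ih, weightedBackwardShift_apply, smul_smul, ← pow_succ,
      add_assoc]

theorem dense_setOf_eventually_pow_weightedBackwardShift_apply_eq_zero (w : 𝕜) :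
    Dense {x : C₀(ℕ, E) | ∀ᶠ n in atTop, (weightedBackwardShift w ^ n) x = 0} := by
  refine dense_iff_closure_eq.2 (eq_univ_of_forall fun x => ?_)
  refine mem_closure_of_tendsto x.tendsto_truncate (Eventually.of_forall fun m => ?_)
  filter_upwards [eventually_ge_atTop m] with n hn
  ext k
  rw [pow_weightedBackwardShift_apply, truncate_apply_of_le _ (hn.trans (Nat.le_add_left n k)),
    smul_zero, zero_apply]

theorem tendsto_pow_weightedForwardShift {c : 𝕜} (hc : ‖c‖ < 1) :
    Tendsto (fun n : ℕ => (weightedForwardShift c : C₀(ℕ, E) →L[𝕜] C₀(ℕ, E)) ^ n) atTop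
      (𝓝 0) :=
  tendsto_pow_atTop_nhds_zero_of_norm_lt_one (R := C₀(ℕ, E) →L[𝕜] C₀(ℕ, E))
    ((norm_weightedForwardShift_le c).trans_lt hc)

end ZeroAtInftyContinuousMap

open ZeroAtInftyContinuousMap

/-- For every `w` in `𝕜 = ℝ` or `ℂ` with `‖w‖ > 1`, the bounded weighted
backward shift `A_w` on `c₀`, `(A_w x) k = w * x (k+1)`, is chaotic: it possesses a
hypercyclic vector and its set of periodic points is dense in `c₀`. -/
theorem bounded_backward_shift_chaotic_on_c0
    (𝕜 : Type*) [RCLike 𝕜] (w : 𝕜) (hw : 1 < ‖w‖)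
    (A : C₀(ℕ, 𝕜) →L[𝕜] C₀(ℕ, 𝕜))
    (hA : ∀ (x : C₀(ℕ, 𝕜)) (k : ℕ), A x k = w * x (k + 1)) :
    (∃ x : C₀(ℕ, 𝕜), Dense (Set.range fun n : ℕ => (A ^ n) x)) ∧
      Dense {x : C₀(ℕ, 𝕜) | ∃ N : ℕ, 1 ≤ N ∧ (A ^ N) x = x} := by
  have hA_eq : A = weightedBackwardShift w := by
    ext x k
    simp [hA]
  have hTS := weightedBackwardShift_mul_weightedForwardShift_inv (E := 𝕜)
    (norm_pos_iff.1 (one_pos.trans hw))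
  have hS := tendsto_pow_weightedForwardShift (E := 𝕜) (c := w⁻¹)
    (by rw [norm_inv]; exact inv_lt_one_of_one_lt₀ hw)
  have hD := dense_setOf_eventually_pow_weightedBackwardShift_apply_eq_zero (E := 𝕜) w
  rw [hA_eq]
  refine ⟨(ContinuousLinearMap.dense_setOf_denseRange_pow_apply hTS hS hD).nonempty, ?_⟩
  convert ContinuousLinearMap.dense_periodicPts hTS hS hD using 1
  ext x
  simp [periodicPts, IsPeriodicPt, IsFixedPt, Nat.one_le_iff_ne_zero, pos_iff_ne_zero]
end

section
/- For every w ∈ 𝔽 with |w| > 1, the unbounded weighted backward shift A_w in c₀ is chaotic: there exists x ∈ C^∞(A_w) = ⋂_{n≥1} D(A_wⁿ) whose orbit {A_wⁿ x : n ≥ 0} is dense in c₀, and the set of periodic points of A_w is dense in c₀. -/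
open Filter Topology

/-- Sequences vanishing at infinity (the space `c₀`, here as a set of raw sequences;
the Lean index `k` corresponds to the paper's index `k + 1`). -/
def c0Set (𝕜 : Type*) [RCLike 𝕜] : Set (ℕ → 𝕜) :=
  {x | Tendsto x atTop (nhds (0 : 𝕜))}

/-- The action of the `n`-th power `A_wⁿ` of the unbounded weighted backward shift
(`powAct w 0 = id`, `powAct w 1` is the action of `A_w` itself):
`(A_wⁿ x)_k = (∏_{j=k}^{k+n-1} w^j) x_{k+n}` for the paper's `1`-based index `k ≥ 1`,
i.e. `(A_wⁿ x) k = (∏_{j=k+1}^{k+n} w^j) * x (k+n)` in `0`-based indexing. -/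
def powAct {𝕜 : Type*} [RCLike 𝕜] (w : 𝕜) (n : ℕ) (x : ℕ → 𝕜) : ℕ → 𝕜 :=
  fun k => (∏ j ∈ Finset.Ico (k + 1) (k + n + 1), w ^ j) * x (k + n)

/-- The maximal domain `D(A_wⁿ) = {x ∈ c₀ : A_wⁿ x ∈ c₀}`. -/
def powDom {𝕜 : Type*} [RCLike 𝕜] (w : 𝕜) (n : ℕ) : Set (ℕ → 𝕜) :=
  {x | x ∈ c0Set 𝕜 ∧ powAct w n x ∈ c0Set 𝕜}

/-- The sup-norm `‖x‖_∞ = sup_k |x_k|` of a sequence. -/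
noncomputable def supNorm {𝕜 : Type*} [RCLike 𝕜] (f : ℕ → 𝕜) : ℝ :=
  ⨆ k, ‖f k‖

/-! A finite block `b` placed at position `p`, its entries divided by `w ^ shiftExp k p`, is
moved back to `[0, L)` by `A_wᵖ`. The hypercyclic vector places blocks running through a countable
dense family at positions `p₀ < p₁ < ⋯` growing so fast that the division by `w ^ shiftExp k pₘ`
beats both the size of the `m`-th block and every power `A_wᵃ` with `a ≤ pₘ₋₁`; hence `A_wᵃ x ∈ c₀`
for all `a`, and `A_w^{pₘ} x` is the `m`-th block followed by a small tail.
A periodic point near `y` is obtained by solving `A_wᴺ x = x` forward from `y` on `[0, N)`: the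
later copies of the first period are divided by ever larger powers of `w`. -/

section ShiftExponent

def shiftExp (k n : ℕ) : ℕ := ∑ j ∈ Finset.Ico (k + 1) (k + n + 1), j

lemma two_mul_shiftExp (k n : ℕ) : 2 * shiftExp k n = n * (2 * k + n + 1) := by
  induction n with
  | zero => simp [shiftExp]
  | succ n ih =>
    rw [shiftExp, show k + (n + 1) + 1 = k + n + 1 + 1 by omega,
      Finset.sum_Ico_succ_top (by omega), mul_add, ← shiftExp, ih]
    ring

lemma le_shiftExp (k n : ℕ) : n ≤ shiftExp k n := by
  have := two_mul_shiftExp k n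
  nlinarith

lemma shiftExp_add (k m n : ℕ) :
    shiftExp k (m + n) = shiftExp k m + shiftExp (k + m) n := by
  rw [shiftExp, shiftExp, shiftExp, Finset.sum_Ico_consecutive _ (by omega) (by omega),
    ← add_assoc k m n]

variable {𝕜 : Type*} [RCLike 𝕜]

lemma powAct_apply (w : 𝕜) (n : ℕ) (x : ℕ → 𝕜) (k : ℕ) :
    powAct w n x k = w ^ shiftExp k n * x (k + n) := by
  rw [powAct, shiftExp, Finset.prod_pow_eq_pow_sum]

lemma powAct_zero (w : 𝕜) (x : ℕ → 𝕜) : powAct w 0 x = x := by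
  funext k
  simp [powAct]

lemma supNorm_lt_of_le {f : ℕ → 𝕜} {δ ε : ℝ} (h : ∀ k, ‖f k‖ ≤ δ) (hδ : δ < ε) :
    supNorm f < ε :=
  (ciSup_le h).trans_lt hδ

end ShiftExponent

section Periodic

variable {𝕜 : Type*} [RCLike 𝕜] (w : 𝕜) (N : ℕ) (y : ℕ → 𝕜)

noncomputable def periodicExtension : ℕ → 𝕜 :=
  fun j => y (j % N) / w ^ shiftExp (j % N) (N * (j / N))

lemma periodicExtension_of_lt {j : ℕ} (hj : j < N) : periodicExtension w N y j = y j := by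
  simp [periodicExtension, Nat.mod_eq_of_lt hj, Nat.div_eq_of_lt hj, shiftExp]

lemma powAct_periodicExtension (hw : w ≠ 0) (hN : 0 < N) :
    powAct w N (periodicExtension w N y) = periodicExtension w N y := by
  funext k
  simp only [powAct_apply, periodicExtension, Nat.add_mod_right, Nat.add_div_right k hN,
    mul_add_one, shiftExp_add, Nat.mod_add_div, pow_add]
  field_simp

lemma norm_periodicExtension_le (hw : 1 ≤ ‖w‖) {C : ℝ} (hC : ∀ k, ‖y k‖ ≤ C) (j : ℕ) :
    ‖periodicExtension w N y j‖ ≤ C / ‖w‖ ^ (N * (j / N)) := by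
  rw [periodicExtension, norm_div, norm_pow]
  exact div_le_div₀ ((norm_nonneg _).trans (hC 0)) (hC _) (by positivity)
    (pow_le_pow_right₀ hw (le_shiftExp _ _))

lemma periodicExtension_mem_c0Set (hw : 1 < ‖w‖) (hN : 0 < N) {C : ℝ} (hC : ∀ k, ‖y k‖ ≤ C) :
    periodicExtension w N y ∈ c0Set 𝕜 := by
  have hperiods : Tendsto (fun j => N * (j / N)) atTop atTop :=
    tendsto_atTop_mono (fun j => Nat.le_mul_of_pos_left _ hN) (Nat.tendsto_div_const_atTop hN.ne')
  exact squeeze_zero_norm (norm_periodicExtension_le w N y hw.le hC)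
    (tendsto_const_nhds.div_atTop ((tendsto_pow_atTop_atTop_of_one_lt hw).comp hperiods))

end Periodic

theorem periodic_points_dense {𝕜 : Type*} [RCLike 𝕜] (w : 𝕜) (hw : 1 < ‖w‖) :
    ∀ y ∈ c0Set 𝕜, ∀ ε > (0 : ℝ),
      ∃ x : ℕ → 𝕜, (∃ N : ℕ, 1 ≤ N ∧ x ∈ powDom w N ∧ powAct w N x = x) ∧
        supNorm (x - y) < ε := by
  intro y hy ε hε
  obtain ⟨C, hC⟩ : ∃ C, ∀ k, ‖y k‖ ≤ C :=
    hy.norm.bddAbove_range.imp fun C hC k => hC ⟨k, rfl⟩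
  obtain ⟨M, hM⟩ :=
    eventually_atTop.mp (NormedAddGroup.tendsto_nhds_zero.mp hy (ε / 4) (by positivity))
  obtain ⟨N, hMN, hN, hCN⟩ : ∃ N, M ≤ N ∧ 0 < N ∧ C / ‖w‖ ^ N ≤ ε / 4 :=
    ((eventually_ge_atTop M).and ((eventually_gt_atTop 0).and
      ((tendsto_const_nhds.div_atTop (tendsto_pow_atTop_atTop_of_one_lt hw)).eventually
        (ge_mem_nhds (by positivity))))).exists
  set x := periodicExtension w N y
  have hx_periodic := powAct_periodicExtension w N y (norm_pos_iff.mp (one_pos.trans hw)) hN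
  have hx_c0 := periodicExtension_mem_c0Set w N y hw hN hC
  refine ⟨x, ⟨N, hN, ⟨hx_c0, hx_periodic ▸ hx_c0⟩, hx_periodic⟩,
    supNorm_lt_of_le (δ := ε / 2) (fun j => ?_) (by linarith)⟩
  rcases lt_or_ge j N with hj | hj
  · simp only [Pi.sub_apply, x, periodicExtension_of_lt w N y hj, sub_self, norm_zero]
    positivity
  have hx_small : ‖x j‖ ≤ ε / 4 := by
    refine (norm_periodicExtension_le w N y hw.le hC j).trans (le_trans ?_ hCN)
    exact div_le_div_of_nonneg_left ((norm_nonneg _).trans (hC 0)) (by positivity)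
      (pow_le_pow_right₀ hw.le (Nat.le_mul_of_pos_right _ (Nat.div_pos hj hN)))
  calc ‖x j - y j‖ ≤ ‖x j‖ + ‖y j‖ := norm_sub_le _ _
    _ ≤ ε / 4 + ε / 4 := add_le_add hx_small (hM j (hMN.trans hj)).le
    _ = ε / 2 := by ring

section Placement

variable (L D : ℕ → ℕ) {m m' : ℕ}

def placement : ℕ → ℕ
  | 0 => 0
  | m + 1 => (placement m + L m + L (m + 1) + D (m + 1) + 4) ^ 2

lemma le_placement_succ :
    placement L D m + L m + L (m + 1) + D (m + 1) + 4 ≤ placement L D (m + 1) :=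
  Nat.le_self_pow two_ne_zero _

lemma le_placement (m : ℕ) : m ≤ placement L D m := by
  induction m with
  | zero => exact le_rfl
  | succ m ih => have := le_placement_succ L D (m := m); omega

lemma placement_mono : Monotone (placement L D) :=
  monotone_nat_of_le_succ fun m => by have := le_placement_succ L D (m := m); omega

lemma placement_add_le_of_lt (h : m < m') : placement L D m + L m ≤ placement L D m' :=
  calc placement L D m + L m ≤ placement L D (m + 1) := by
        have := le_placement_succ L D (m := m); omega
    _ ≤ placement L D m' := placement_mono L D h

lemma eq_of_mem_block {j : ℕ} (h : placement L D m ≤ j ∧ j < placement L D m + L m)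
    (h' : placement L D m' ≤ j ∧ j < placement L D m' + L m') : m = m' := by
  rcases lt_trichotomy m m' with hlt | heq | hgt
  · have := placement_add_le_of_lt L D hlt; omega
  · exact heq
  · have := placement_add_le_of_lt L D hgt; omega

lemma two_mul_placement_le :
    2 * (placement L D m * (placement L D (m + 1) + L (m + 1)) + D (m + 1)) ≤
      placement L D (m + 1) ^ 2 := by
  set c := placement L D m + L m + L (m + 1) + D (m + 1) + 4
  have hc : placement L D (m + 1) = c ^ 2 := rfl
  have h4 : 4 ≤ c := by omega
  calc 2 * (placement L D m * (placement L D (m + 1) + L (m + 1)) + D (m + 1))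
      ≤ 2 * (c * (c ^ 2 + c) + c) := by
        rw [hc]
        gcongr <;> omega
    _ ≤ (c ^ 2) ^ 2 := by nlinarith
    _ = placement L D (m + 1) ^ 2 := by rw [hc]

/-- The growth of the placements: `A_wᵃ` with `a ≤ pₘ` meets block `m + 1` with room `D (m + 1)`
to spare. -/
lemma shiftExp_add_le_shiftExp_placement {a k k' : ℕ} (ha : a ≤ placement L D m)
    (hk : k + a = placement L D (m + 1) + k') (hk' : k' < L (m + 1)) :
    shiftExp k a + D (m + 1) ≤ shiftExp k' (placement L D (m + 1)) := by
  have h₁ : shiftExp k a ≤ a * (k + a) := by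
    have := two_mul_shiftExp k a
    nlinarith [Nat.le_mul_self a]
  have h₂ : a * (k + a) ≤ placement L D m * (placement L D (m + 1) + L (m + 1)) := by
    rw [hk]
    gcongr
  have h₃ : placement L D (m + 1) ^ 2 ≤ 2 * shiftExp k' (placement L D (m + 1)) := by
    rw [two_mul_shiftExp]
    nlinarith
  have := two_mul_placement_le L D (m := m)
  omega

end Placement

section BlockVector

variable {𝕜 : Type*} [RCLike 𝕜] (w : 𝕜) (L D : ℕ → ℕ) (b : ℕ → ℕ → 𝕜)

open Classical in
noncomputable def blockVector : ℕ → 𝕜 := fun j =>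
  if h : ∃ m, placement L D m ≤ j ∧ j < placement L D m + L m then
    b h.choose (j - placement L D h.choose) /
      w ^ shiftExp (j - placement L D h.choose) (placement L D h.choose)
  else 0

lemma blockVector_placement_add {m k : ℕ} (hk : k < L m) :
    blockVector w L D b (placement L D m + k) = b m k / w ^ shiftExp k (placement L D m) := by
  have hblock : ∃ m', placement L D m' ≤ placement L D m + k ∧
      placement L D m + k < placement L D m' + L m' := ⟨m, by omega, by omega⟩
  have hm : hblock.choose = m := eq_of_mem_block L D hblock.choose_spec ⟨by omega, by omega⟩
  rw [blockVector, dif_pos hblock, hm, Nat.add_sub_cancel_left]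

lemma blockVector_eq_zero_or (j : ℕ) :
    blockVector w L D b j = 0 ∨ ∃ m k, k < L m ∧ j = placement L D m + k := by
  by_cases h : ∃ m, placement L D m ≤ j ∧ j < placement L D m + L m
  · obtain ⟨m, hm⟩ := h
    exact Or.inr ⟨m, j - placement L D m, by omega, by omega⟩
  · exact Or.inl (by rw [blockVector, dif_neg h])

lemma powAct_blockVector_placement (hw : w ≠ 0) {m k : ℕ} (hk : k < L m) :
    powAct w (placement L D m) (blockVector w L D b) k = b m k := by
  rw [powAct_apply, add_comm, blockVector_placement_add w L D b hk]
  field_simp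

lemma norm_powAct_blockVector_le_of_eq (hw : 1 < ‖w‖)
    (hb : ∀ m k, k < L m → ‖b m k‖ ≤ ‖w‖ ^ D m * (1 / 2) ^ m) {m a k k' : ℕ}
    (ha : a ≤ placement L D m)
    (hk : k + a = placement L D (m + 1) + k') (hk' : k' < L (m + 1)) :
    ‖powAct w a (blockVector w L D b) k‖ ≤ (1 / 2) ^ (m + 1) := by
  have hpos : (0 : ℝ) < ‖w‖ ^ shiftExp k' (placement L D (m + 1)) := by positivity
  rw [powAct_apply, hk, blockVector_placement_add w L D b hk', norm_mul, norm_div, norm_pow,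
    norm_pow, mul_div_assoc', div_le_iff₀ hpos]
  calc ‖w‖ ^ shiftExp k a * ‖b (m + 1) k'‖
      ≤ ‖w‖ ^ shiftExp k a * (‖w‖ ^ D (m + 1) * (1 / 2) ^ (m + 1)) := by
        gcongr
        exact hb _ _ hk'
    _ = ‖w‖ ^ (shiftExp k a + D (m + 1)) * (1 / 2) ^ (m + 1) := by ring
    _ ≤ ‖w‖ ^ shiftExp k' (placement L D (m + 1)) * (1 / 2) ^ (m + 1) := by
        gcongr
        · exact hw.le
        · exact shiftExp_add_le_shiftExp_placement L D ha hk hk'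
    _ = (1 / 2) ^ (m + 1) * ‖w‖ ^ shiftExp k' (placement L D (m + 1)) := mul_comm _ _

lemma norm_powAct_blockVector_le (hw : 1 < ‖w‖)
    (hb : ∀ m k, k < L m → ‖b m k‖ ≤ ‖w‖ ^ D m * (1 / 2) ^ m) {M a k : ℕ} (ha : a ≤ placement L D M)
    (hk : placement L D M + L M ≤ k + a) :
    ‖powAct w a (blockVector w L D b) k‖ ≤ (1 / 2) ^ (M + 1) := by
  rcases blockVector_eq_zero_or w L D b (k + a) with h0 | ⟨m, k', hk', hm⟩
  · rw [powAct_apply, h0, mul_zero, norm_zero]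
    positivity
  have hMm : M < m := by
    by_contra! hmM
    rcases hmM.lt_or_eq with hlt | rfl
    · have := placement_add_le_of_lt L D hlt; omega
    · omega
  obtain ⟨m, rfl⟩ : ∃ m₀, m = m₀ + 1 := ⟨m - 1, by omega⟩
  exact (norm_powAct_blockVector_le_of_eq w L D b hw hb
    (ha.trans (placement_mono L D (by omega))) hm hk').trans
    (pow_le_pow_of_le_one (by norm_num) (by norm_num) (by omega))

lemma powAct_blockVector_mem_c0Set (hw : 1 < ‖w‖)
    (hb : ∀ m k, k < L m → ‖b m k‖ ≤ ‖w‖ ^ D m * (1 / 2) ^ m) (a : ℕ) :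
    powAct w a (blockVector w L D b) ∈ c0Set 𝕜 := by
  refine NormedAddGroup.tendsto_nhds_zero.mpr fun δ hδ => ?_
  obtain ⟨M, hM⟩ := exists_pow_lt_of_lt_one hδ (by norm_num : (1 / 2 : ℝ) < 1)
  have ha : a ≤ placement L D (max M a) := (le_max_right M a).trans (le_placement L D _)
  refine eventually_atTop.mpr ⟨placement L D (max M a) + L (max M a), fun k hk => ?_⟩
  exact (norm_powAct_blockVector_le w L D b hw hb ha (by omega)).trans_lt
    ((pow_le_pow_of_le_one (by norm_num) (by norm_num) (by omega)).trans_lt hM)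

lemma blockVector_mem_powDom (hw : 1 < ‖w‖)
    (hb : ∀ m k, k < L m → ‖b m k‖ ≤ ‖w‖ ^ D m * (1 / 2) ^ m) (n : ℕ) :
    blockVector w L D b ∈ powDom w n :=
  ⟨powAct_zero w (blockVector w L D b) ▸ powAct_blockVector_mem_c0Set w L D b hw hb 0,
    powAct_blockVector_mem_c0Set w L D b hw hb n⟩

end BlockVector

lemma exists_dense_blocks (E : Type*) [NormedAddCommGroup E] [TopologicalSpace.SeparableSpace E] :
    ∃ (L : ℕ → ℕ) (b : ℕ → ℕ → E), ∀ y : ℕ → E, Tendsto y atTop (𝓝 0) → ∀ ε > (0 : ℝ),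
      ∀ M, ∃ m ≥ M, (∀ k < L m, ‖b m k - y k‖ < ε) ∧ ∀ k ≥ L m, ‖y k‖ < ε := by
  obtain ⟨blk, hblk⟩ : ∃ blk : ℕ → ℕ → ℕ → E,
      ∀ n i (k : Fin n), blk n i k = TopologicalSpace.denseSeq (Fin n → E) i k :=
    ⟨fun n i k => if h : k < n then TopologicalSpace.denseSeq (Fin n → E) i ⟨k, h⟩ else 0,
      fun n i k => dif_pos k.2⟩
  refine ⟨fun m => m.unpair.2.unpair.1, fun m => blk m.unpair.2.unpair.1 m.unpair.2.unpair.2, ?_⟩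
  intro y hy ε hε M
  obtain ⟨n, hn⟩ := eventually_atTop.mp (NormedAddGroup.tendsto_nhds_zero.mp hy ε hε)
  obtain ⟨i, hi⟩ := (TopologicalSpace.denseRange_denseSeq (Fin n → E)).exists_dist_lt
    (fun k : Fin n => y k) hε
  refine ⟨Nat.pair M (Nat.pair n i), Nat.left_le_pair _ _, fun k hk => ?_, ?_⟩
  · simp only [Nat.unpair_pair] at hk ⊢
    rw [hblk n i ⟨k, hk⟩, ← dist_eq_norm, dist_comm]
    exact (dist_pi_lt_iff hε).mp hi ⟨k, hk⟩
  · simpa only [Nat.unpair_pair] using hn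

lemma exists_pow_mul_half_pow_bound {E : Type*} [NormedAddCommGroup E] {r : ℝ} (hr : 1 < r)
    (L : ℕ → ℕ) (b : ℕ → ℕ → E) :
    ∃ D : ℕ → ℕ, ∀ m k, k < L m → ‖b m k‖ ≤ r ^ D m * (1 / 2) ^ m := by
  choose D hD using fun m =>
    pow_unbounded_of_one_lt ((∑ k ∈ Finset.range (L m), ‖b m k‖) * 2 ^ m) hr
  refine ⟨D, fun m k hk => ?_⟩
  have hk_le := Finset.single_le_sum (fun i _ => norm_nonneg (b m i)) (Finset.mem_range.mpr hk)
  rw [one_div, inv_pow, ← div_eq_mul_inv, le_div_iff₀ (by positivity)]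
  exact (mul_le_mul_of_nonneg_right hk_le (by positivity)).trans (hD m).le

theorem exists_hypercyclic_vector {𝕜 : Type*} [RCLike 𝕜] (w : 𝕜) (hw : 1 < ‖w‖) :
    ∃ x : ℕ → 𝕜, (∀ n : ℕ, 1 ≤ n → x ∈ powDom w n) ∧
      ∀ y ∈ c0Set 𝕜, ∀ ε > (0 : ℝ), ∃ n : ℕ, supNorm (powAct w n x - y) < ε := by
  obtain ⟨L, b, hdense⟩ := exists_dense_blocks 𝕜
  obtain ⟨D, hb⟩ := exists_pow_mul_half_pow_bound hw L b
  set x := blockVector w L D b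
  refine ⟨x, fun n _ => blockVector_mem_powDom w L D b hw hb n, fun y hy ε hε => ?_⟩
  obtain ⟨M, hM⟩ :=
    exists_pow_lt_of_lt_one (by positivity : 0 < ε / 4) (by norm_num : (1 / 2 : ℝ) < 1)
  obtain ⟨m, hMm, hnear, htail⟩ := hdense y hy (ε / 4) (by positivity) M
  refine ⟨placement L D m, supNorm_lt_of_le (δ := ε / 2) (fun k => ?_) (by linarith)⟩
  rw [Pi.sub_apply]
  rcases lt_or_ge k (L m) with hk | hk
  · rw [powAct_blockVector_placement w L D b (norm_pos_iff.mp (one_pos.trans hw)) hk]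
    linarith [hnear k hk]
  have horbit_small : ‖powAct w (placement L D m) x k‖ ≤ ε / 4 :=
    (norm_powAct_blockVector_le w L D b hw hb le_rfl (by omega)).trans
      ((pow_le_pow_of_le_one (by norm_num) (by norm_num) (by omega)).trans hM.le)
  calc ‖powAct w (placement L D m) x k - y k‖
      ≤ ‖powAct w (placement L D m) x k‖ + ‖y k‖ := norm_sub_le _ _
    _ ≤ ε / 4 + ε / 4 := add_le_add horbit_small (htail k hk).le
    _ = ε / 2 := by ring

/-- For every `w` with `‖w‖ > 1`, the unbounded weighted backward shift
`A_w` in `c₀` is chaotic: there exists `x ∈ C^∞(A_w) = ⋂_{n ≥ 1} D(A_wⁿ)` whose orbit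
`{A_wⁿ x : n ≥ 0}` is dense in `c₀` (w.r.t. the sup-norm), and the set of periodic points
of `A_w` is dense in `c₀`. -/
theorem unbounded_backward_shift_chaotic
    (𝕜 : Type*) [RCLike 𝕜] (w : 𝕜) (hw : 1 < ‖w‖) :
    (∃ x : ℕ → 𝕜, (∀ n : ℕ, 1 ≤ n → x ∈ powDom w n) ∧
      ∀ y ∈ c0Set 𝕜, ∀ ε > (0 : ℝ), ∃ n : ℕ, supNorm (powAct w n x - y) < ε) ∧
    (∀ y ∈ c0Set 𝕜, ∀ ε > (0 : ℝ),
      ∃ x : ℕ → 𝕜, (∃ N : ℕ, 1 ≤ N ∧ x ∈ powDom w N ∧ powAct w N x = x) ∧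
        supNorm (x - y) < ε) :=
  ⟨exists_hypercyclic_vector w hw, periodic_points_dense w hw⟩
end

section
/- For every w ∈ 𝔽 with |w| > 1 and every λ ∈ 𝔽, λ is an eigenvalue of the unbounded weighted backward shift A_w in c₀ of geometric multiplicity 1: the solution set of A_w x = λx, x ∈ D(A_w), is the one-dimensional subspace spanned by the sequence y = (y_k)_{k≥1} with y_k = λ^{k−1}/w^{k(k−1)/2} (with 0⁰ := 1), which lies in D(A_w) and is nonzero. In particular, when 𝔽 = ℂ, the point spectrum of A_w is all of ℂ. -/
open Filter Topology

/-- The action of the unbounded weighted backward shift `A_w`: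
`(A_w x)_k = w^k x_{k+1}` for the paper's `1`-based index `k ≥ 1`, i.e.
`(A_w x) k = w^(k+1) * x (k+1)` in `0`-based indexing. -/
def shiftAct {𝕜 : Type*} [RCLike 𝕜] (w : 𝕜) (x : ℕ → 𝕜) : ℕ → 𝕜 :=
  fun k => w ^ (k + 1) * x (k + 1)

/-- The maximal domain `D(A_w) = {x ∈ c₀ : A_w x ∈ c₀}`. -/
def shiftDom {𝕜 : Type*} [RCLike 𝕜] (w : 𝕜) : Set (ℕ → 𝕜) :=
  {x | x ∈ c0Set 𝕜 ∧ shiftAct w x ∈ c0Set 𝕜}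

/-!
The eigenvalue equation `w^(k+1) x (k+1) = λ x k` is a first-order recursion, so every solution
is determined by `x 0`, and the solution with `x 0 = 1` is `y k = λ^k / w^(k(k+1)/2)`. Since
`y (k+1) / y k = λ / w^(k+1)` tends to `0` when `‖w‖ > 1`, the ratio test puts `y` in `c₀`, and
then `A_w y = λ y` lies in `c₀` as well.
-/

theorem triangle_add_one (k : ℕ) : (k + 1) * (k + 1 + 1) / 2 = k * (k + 1) / 2 + (k + 1) := by
  rw [show (k + 1) * (k + 1 + 1) = k * (k + 1) + 2 * (k + 1) by ring,
    Nat.add_mul_div_left _ _ two_pos]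

section

variable {𝕜 : Type*} [RCLike 𝕜]

theorem smul_mem_c0Set (c : 𝕜) {x : ℕ → 𝕜} (hx : x ∈ c0Set 𝕜) : c • x ∈ c0Set 𝕜 := by
  have h : Tendsto (c • x) atTop (𝓝 (c • 0)) := Tendsto.const_smul hx c
  rwa [smul_zero] at h

theorem shiftAct_smul (w c : 𝕜) (x : ℕ → 𝕜) : shiftAct w (c • x) = c • shiftAct w x := by
  funext k
  simp only [shiftAct, Pi.smul_apply, smul_eq_mul]
  ring

theorem smul_mem_shiftDom {w : 𝕜} (c : 𝕜) {x : ℕ → 𝕜} (hx : x ∈ shiftDom w) :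
    c • x ∈ shiftDom w := by
  refine ⟨smul_mem_c0Set c hx.1, ?_⟩
  rw [shiftAct_smul]
  exact smul_mem_c0Set c hx.2

def shiftEigenvector (w lam : 𝕜) : ℕ → 𝕜 :=
  fun k => lam ^ k / w ^ (k * (k + 1) / 2)

variable {w : 𝕜}

theorem shiftEigenvector_zero (w lam : 𝕜) : shiftEigenvector w lam 0 = 1 := by
  simp [shiftEigenvector]

theorem shiftEigenvector_ne_zero (w lam : 𝕜) : shiftEigenvector w lam ≠ 0 :=
  fun h => one_ne_zero ((shiftEigenvector_zero w lam).symm.trans (congrFun h 0))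

theorem pow_mul_shiftEigenvector_succ (hw : w ≠ 0) (lam : 𝕜) (k : ℕ) :
    w ^ (k + 1) * shiftEigenvector w lam (k + 1) = lam * shiftEigenvector w lam k := by
  simp only [shiftEigenvector]
  rw [triangle_add_one, pow_add w (k * (k + 1) / 2), pow_succ lam]
  field_simp

theorem shiftAct_shiftEigenvector (hw : w ≠ 0) (lam : 𝕜) :
    shiftAct w (shiftEigenvector w lam) = lam • shiftEigenvector w lam :=
  funext (pow_mul_shiftEigenvector_succ hw lam)

theorem eq_smul_shiftEigenvector_of_shiftAct_eq (hw : w ≠ 0) {lam : 𝕜} {x : ℕ → 𝕜}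
    (hx : shiftAct w x = lam • x) : x = x 0 • shiftEigenvector w lam := by
  funext k
  simp only [Pi.smul_apply, smul_eq_mul]
  induction k with
  | zero => rw [shiftEigenvector_zero, mul_one]
  | succ k ih =>
    have hxk : w ^ (k + 1) * x (k + 1) = lam * x k := congrFun hx k
    have hyk := pow_mul_shiftEigenvector_succ hw lam k
    apply mul_left_cancel₀ (pow_ne_zero (k + 1) hw)
    rw [hxk, ih, mul_left_comm, ← hyk]
    ring

theorem tendsto_shiftEigenvector (hw : 1 < ‖w‖) (lam : 𝕜) :
    Tendsto (shiftEigenvector w lam) atTop (𝓝 0) := by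
  set y := shiftEigenvector w lam
  have hw0 : w ≠ 0 := norm_pos_iff.mp (one_pos.trans hw)
  suffices Summable y from this.tendsto_atTop_zero
  refine summable_of_ratio_norm_eventually_le (r := 1 / 2) (by norm_num) ?_
  have hgrow : Tendsto (fun n : ℕ => ‖w‖ ^ (n + 1)) atTop atTop :=
    (tendsto_pow_atTop_atTop_of_one_lt hw).comp (tendsto_add_atTop_nat 1)
  filter_upwards [hgrow.eventually_ge_atTop (2 * ‖lam‖)] with n hn
  have hpos : 0 < ‖w‖ ^ (n + 1) := pow_pos (one_pos.trans hw) _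
  have hnorm : ‖w‖ ^ (n + 1) * ‖y (n + 1)‖ = ‖lam‖ * ‖y n‖ := by
    simpa only [norm_mul, norm_pow] using congrArg norm (pow_mul_shiftEigenvector_succ hw0 lam n)
  refine le_of_mul_le_mul_left ?_ hpos
  rw [hnorm]
  nlinarith [norm_nonneg (y n)]

theorem shiftEigenvector_mem_shiftDom (hw : 1 < ‖w‖) (lam : 𝕜) :
    shiftEigenvector w lam ∈ shiftDom w := by
  have hy : shiftEigenvector w lam ∈ c0Set 𝕜 := tendsto_shiftEigenvector hw lam
  refine ⟨hy, ?_⟩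
  rw [shiftAct_shiftEigenvector (norm_pos_iff.mp (one_pos.trans hw))]
  exact smul_mem_c0Set lam hy

end

/-- For every `w` with `‖w‖ > 1` and every `λ`, `λ` is an eigenvalue of the
unbounded weighted backward shift `A_w` in `c₀` of geometric multiplicity `1`: the solution
set of `A_w x = λ x`, `x ∈ D(A_w)`, is the one-dimensional subspace spanned by the sequence
`y` with `y_k = λ^{k-1} / w^{k(k-1)/2}` (paper's `1`-based `k ≥ 1`, i.e.
`y k = λ^k / w^{(k+1)k/2}` in `0`-based indexing; `0⁰ = 1`), which lies in `D(A_w)` and is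
nonzero. In particular, for `𝕜 = ℂ` the point spectrum of `A_w` is all of `ℂ`. -/
theorem unbounded_backward_shift_eigenvalues
    (𝕜 : Type*) [RCLike 𝕜] (w : 𝕜) (hw : 1 < ‖w‖) (lam : 𝕜) :
    (fun k : ℕ => lam ^ k / w ^ (k * (k + 1) / 2)) ∈ shiftDom w ∧
    (fun k : ℕ => lam ^ k / w ^ (k * (k + 1) / 2)) ≠ 0 ∧
    {x : ℕ → 𝕜 | x ∈ shiftDom w ∧ shiftAct w x = lam • x} =
      Set.range fun c : 𝕜 => c • fun k : ℕ => lam ^ k / w ^ (k * (k + 1) / 2) := by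
  have hw0 : w ≠ 0 := norm_pos_iff.mp (one_pos.trans hw)
  change shiftEigenvector w lam ∈ shiftDom w ∧ shiftEigenvector w lam ≠ 0 ∧
    _ = Set.range fun c : 𝕜 => c • shiftEigenvector w lam
  refine ⟨shiftEigenvector_mem_shiftDom hw lam, shiftEigenvector_ne_zero w lam, ?_⟩
  ext x
  constructor
  · rintro ⟨-, hx⟩
    exact ⟨x 0, (eq_smul_shiftEigenvector_of_shiftAct_eq hw0 hx).symm⟩
  · rintro ⟨c, rfl⟩
    refine ⟨smul_mem_shiftDom c (shiftEigenvector_mem_shiftDom hw lam), ?_⟩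
    rw [shiftAct_smul, shiftAct_shiftEigenvector hw0, smul_comm]
end

section
/- For every w ∈ 𝔽 with |w| > 1, the bounded linear operator B_w on c₀ defined by (B_w x)_k = w^{−(k−1)} x_{k−1} (with x₀ := 0) satisfies A_w(B_w x) = x for every eventually zero sequence x, its powers are given by (B_wⁿ x)_k = w^{−nk + n(n+1)/2} x_{k−n} (with x_j := 0 for j ≤ 0), its operator norm satisfies ‖B_wⁿ‖ = |w|^{−n(n+1)/2} for every n ≥ 1, and consequently ‖B_wⁿ‖^{1/n} → 0 as n → ∞, i.e., B_w is quasinilpotent. -/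
/-!
`B` moves the entry in position `j` to position `j + 1` and multiplies it by `w⁻¹ ^ (j + 1)`, so
`Bⁿ` moves it to `j + n` with the factor `w⁻¹ ^ ((j + 1) + ⋯ + (j + n)) = w⁻¹ ^ (n j + n(n+1)/2)`.
For `‖w‖ ≥ 1` the largest of these factors is the one at `j = 0`; it bounds `‖Bⁿ‖` and is attained
at the unit vector `e₀`. Hence `‖Bⁿ‖ ^ (1/n) = ‖w‖ ^ (-(n+1)/2) → 0`.
-/

open Filter Topology
open scoped ZeroAtInfty

theorem Nat.mul_pred_div_two_add_mul_succ_div_two (n : ℕ) :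
    n * (n - 1) / 2 + n * (n + 1) / 2 = n * n := by
  cases n with
  | zero => rfl
  | succ m =>
    have heven := Nat.two_mul_div_two_of_even (Nat.even_mul_succ_self m)
    rw [Nat.add_sub_cancel, show (m + 1) * (m + 1 + 1) = m * (m + 1) + 2 * (m + 1) by ring,
      Nat.add_mul_div_left _ _ two_pos, mul_comm (m + 1) m]
    nlinarith

theorem Nat.succ_mul_succ_succ_div_two (n : ℕ) :
    (n + 1) * (n + 1 + 1) / 2 = n * (n + 1) / 2 + (n + 1) := by
  rw [show (n + 1) * (n + 1 + 1) = n * (n + 1) + 2 * (n + 1) by ring,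
    Nat.add_mul_div_left _ _ two_pos]

namespace ZeroAtInftyContinuousMap

variable {α β : Type*} [TopologicalSpace α]

theorem norm_apply_le_s11 [SeminormedAddCommGroup β] (f : C₀(α, β)) (a : α) : ‖f a‖ ≤ ‖f‖ :=
  f.toBCF.norm_coe_le_norm a

theorem norm_le [SeminormedAddCommGroup β] {f : C₀(α, β)} {C : ℝ} (hC : 0 ≤ C) : ‖f‖ ≤ C ↔ ∀ a, ‖f a‖ ≤ C :=
  f.toBCF.norm_le hC

variable [DiscreteTopology α] [DecidableEq α]

def single [TopologicalSpace β] [Zero β] (a : α) (b : β) : C₀(α, β) where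
  toFun x := if x = a then b else 0
  continuous_toFun := continuous_of_discreteTopology
  zero_at_infty' := by
    rw [cocompact_eq_cofinite]
    refine tendsto_const_nhds.congr' ?_
    filter_upwards [(Set.finite_singleton a).compl_mem_cofinite] with x hx
    exact (if_neg hx).symm

theorem single_apply [TopologicalSpace β] [Zero β] (a : α) (b : β) (x : α) :
    single a b x = if x = a then b else 0 := rfl

theorem norm_single_le [SeminormedAddCommGroup β] (a : α) (b : β) : ‖single a b‖ ≤ ‖b‖ :=
  (norm_le (norm_nonneg b)).2 fun x => by
    rw [single_apply]
    split_ifs <;> simp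

end ZeroAtInftyContinuousMap

open ZeroAtInftyContinuousMap

section WeightedShift

variable {𝕜 : Type*} [NormedField 𝕜] {w : 𝕜} {B : C₀(ℕ, 𝕜) →L[𝕜] C₀(ℕ, 𝕜)}

theorem weightedShift_pow_apply_of_lt (hB0 : ∀ x, B x 0 = 0)
    (hBk : ∀ x k, B x (k + 1) = w⁻¹ ^ (k + 1) * x k) {n k : ℕ} (hk : k < n) (x : C₀(ℕ, 𝕜)) :
    (B ^ n) x k = 0 := by
  induction n generalizing k with
  | zero => omega
  | succ n ih =>
    rw [pow_succ', mul_apply_eq_comp]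
    cases k with
    | zero => exact hB0 _
    | succ k => rw [hBk, ih (by omega), mul_zero]

theorem weightedShift_pow_apply_add (hBk : ∀ x k, B x (k + 1) = w⁻¹ ^ (k + 1) * x k)
    (n j : ℕ) (x : C₀(ℕ, 𝕜)) :
    (B ^ n) x (j + n) = w⁻¹ ^ (n * j + n * (n + 1) / 2) * x j := by
  induction n with
  | zero => simp
  | succ n ih =>
    rw [pow_succ', mul_apply_eq_comp, ← add_assoc, hBk, ih, ← mul_assoc, ← pow_add,
      Nat.succ_mul_succ_succ_div_two]
    congr 2
    ring

theorem weightedShift_pow_apply (hB0 : ∀ x, B x 0 = 0)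
    (hBk : ∀ x k, B x (k + 1) = w⁻¹ ^ (k + 1) * x k) (n : ℕ) (x : C₀(ℕ, 𝕜)) (k : ℕ) :
    (B ^ n) x k = if n ≤ k then w⁻¹ ^ (n * k - n * (n - 1) / 2) * x (k - n) else 0 := by
  split_ifs with hk
  · obtain ⟨j, rfl⟩ := Nat.exists_eq_add_of_le' hk
    have htri := Nat.mul_pred_div_two_add_mul_succ_div_two n
    have hmul : n * (j + n) = n * j + n * n := by ring
    rw [weightedShift_pow_apply_add hBk, Nat.add_sub_cancel]
    congr 2
    omega
  · exact weightedShift_pow_apply_of_lt hB0 hBk (not_le.1 hk) x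

end WeightedShift

section WeightedShiftNorm

variable {𝕜 : Type*} [NontriviallyNormedField 𝕜] {w : 𝕜} {B : C₀(ℕ, 𝕜) →L[𝕜] C₀(ℕ, 𝕜)}

theorem norm_weightedShift_pow (hw : 1 ≤ ‖w‖) (hB0 : ∀ x, B x 0 = 0)
    (hBk : ∀ x k, B x (k + 1) = w⁻¹ ^ (k + 1) * x k) (n : ℕ) :
    ‖B ^ n‖ = (‖w‖ ^ (n * (n + 1) / 2))⁻¹ := by
  apply le_antisymm
  · refine (B ^ n).opNorm_le_bound (by positivity) fun x => (norm_le (by positivity)).2 fun k => ?_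
    rcases lt_or_ge k n with hk | hk
    · rw [weightedShift_pow_apply_of_lt hB0 hBk hk, norm_zero]
      positivity
    obtain ⟨j, rfl⟩ := Nat.exists_eq_add_of_le' hk
    rw [weightedShift_pow_apply_add hBk, norm_mul, norm_pow, norm_inv, inv_pow]
    gcongr
    · exact Nat.le_add_left _ _
    · exact norm_apply_le_s11 x j
  · calc (‖w‖ ^ (n * (n + 1) / 2))⁻¹ = ‖(B ^ n) (single 0 1) (0 + n)‖ := by
          rw [weightedShift_pow_apply_add hBk, single_apply, if_pos rfl]
          simp
      _ ≤ ‖B ^ n‖ * ‖single 0 (1 : 𝕜)‖ := (norm_apply_le_s11 _ _).trans ((B ^ n).le_opNorm _)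
      _ ≤ ‖B ^ n‖ :=
          mul_le_of_le_one_right (B ^ n).opNorm_nonneg ((norm_single_le 0 1).trans_eq norm_one)

end WeightedShiftNorm

theorem tendsto_inv_pow_triangle_rpow_inv {r : ℝ} (hr : 1 < r) :
    Tendsto (fun n : ℕ => ((r ^ (n * (n + 1) / 2))⁻¹) ^ (n : ℝ)⁻¹) atTop (𝓝 0) := by
  have hr0 : 0 < r := one_pos.trans hr
  have hexp : Tendsto (fun n : ℕ => ((n : ℝ) + 1) / 2) atTop atTop :=
    (tendsto_natCast_atTop_atTop.atTop_add tendsto_const_nhds).atTop_div_const two_pos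
  refine ((tendsto_rpow_atTop_of_base_lt_one r⁻¹ (neg_one_lt_zero.trans (inv_pos.2 hr0))
    (inv_lt_one_of_one_lt₀ hr)).comp hexp).congr' ?_
  filter_upwards [eventually_ne_atTop 0] with n hn
  have hdvd : 2 ∣ n * (n + 1) := (Nat.even_mul_succ_self n).two_dvd
  rw [Function.comp_apply, ← inv_pow, ← Real.rpow_natCast, ← Real.rpow_mul (by positivity),
    Nat.cast_div hdvd two_ne_zero]
  congr 1
  push_cast
  field_simp

/-- For every `w` with `‖w‖ > 1`, the bounded linear operator `B_w` on `c₀`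
given by `(B_w x)_k = w^{-(k-1)} x_{k-1}` (with `x_0 := 0`; here in `0`-based indexing
`(B_w x) 0 = 0` and `(B_w x) (k+1) = w⁻¹^(k+1) * x k`) satisfies `A_w (B_w x) = x` for every
eventually zero sequence `x` (where `A_w` is the unbounded backward shift,
`(A_w y) k = w^(k+1) * y (k+1)`), its powers are `(B_wⁿ x)_k = w^{-nk+n(n+1)/2} x_{k-n}`
(in `0`-based indexing `w⁻¹^{nk - n(n-1)/2} * x (k-n)` for `k ≥ n`, `0` otherwise), its
operator norm satisfies `‖B_wⁿ‖ = |w|^{-n(n+1)/2}` for every `n ≥ 1`, and consequently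
`‖B_wⁿ‖^{1/n} → 0`, i.e. `B_w` is quasinilpotent. -/
theorem right_inverse_quasinilpotent
    (𝕜 : Type*) [RCLike 𝕜] (w : 𝕜) (hw : 1 < ‖w‖)
    (B : C₀(ℕ, 𝕜) →L[𝕜] C₀(ℕ, 𝕜))
    (hB0 : ∀ x : C₀(ℕ, 𝕜), B x 0 = 0)
    (hBk : ∀ (x : C₀(ℕ, 𝕜)) (k : ℕ), B x (k + 1) = w⁻¹ ^ (k + 1) * x k) :
    (∀ x : C₀(ℕ, 𝕜), {k : ℕ | x k ≠ 0}.Finite →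
        ∀ k : ℕ, w ^ (k + 1) * (B x) (k + 1) = x k) ∧
    (∀ n : ℕ, 1 ≤ n → ∀ (x : C₀(ℕ, 𝕜)) (k : ℕ),
        (B ^ n) x k = if n ≤ k then w⁻¹ ^ (n * k - n * (n - 1) / 2) * x (k - n) else 0) ∧
    (∀ n : ℕ, 1 ≤ n → ‖B ^ n‖ = (‖w‖ ^ (n * (n + 1) / 2))⁻¹) ∧
    Tendsto (fun n : ℕ => ‖B ^ n‖ ^ ((n : ℝ)⁻¹)) atTop (nhds 0) := by
  have hw0 : w ≠ 0 := norm_pos_iff.1 (one_pos.trans hw)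
  have hnorm := norm_weightedShift_pow hw.le hB0 hBk
  refine ⟨fun x _ k => ?_, fun n _ => weightedShift_pow_apply hB0 hBk n, fun n _ => hnorm n, ?_⟩
  · rw [hBk, inv_pow, mul_inv_cancel_left₀ (pow_ne_zero _ hw0)]
  · simpa only [hnorm] using tendsto_inv_pow_triangle_rpow_inv hw
end

section
/- For every w ∈ 𝔽 with |w| > 1, the bounded weighted backward shift A_w on the space c of convergent sequences, (A_w x)_k = w·x_{k+1}, is not hypercyclic: no x ∈ c has dense orbit {A_wⁿ x : n ≥ 0} in c. -/
/-!
The limit functional `lim : c → 𝕜` is continuous and onto, and it intertwines the shift with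
multiplication by `w`: `lim (A x) = w * lim x`. Hence it maps a dense orbit of `A` onto the dense
set `{wⁿ * lim x}`. But for `‖w‖ ≥ 1` these points all lie in the closed set `{y | ‖lim x‖ ≤ ‖y‖}`,
so density forces `lim x = 0`, and then the set is `{0}`.
-/

open Filter Topology BoundedContinuousFunction

/-- The space `c` of convergent sequences, as a submodule of the bounded sequences
`ℕ →ᵇ 𝕜` with the sup-norm. -/
def convSeq (𝕜 : Type*) [RCLike 𝕜] : Submodule 𝕜 (ℕ →ᵇ 𝕜) where
  carrier := {x | ∃ L : 𝕜, Tendsto ⇑x atTop (nhds L)}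
  add_mem' := by
    rintro x y ⟨Lx, hx⟩ ⟨Ly, hy⟩
    exact ⟨Lx + Ly, (hx.add hy).congr (fun n => by simp)⟩
  zero_mem' := ⟨0, (tendsto_const_nhds : Tendsto (fun _ : ℕ => (0 : 𝕜)) atTop (nhds 0)).congr (fun n => by simp)⟩
  smul_mem' := by
    rintro c x ⟨L, hx⟩
    exact ⟨c • L, by simpa using hx.const_smul c⟩

theorem not_denseRange_pow_mul {K : Type*} [NormedDivisionRing K] {w : K} (hw : 1 ≤ ‖w‖)
    (z : K) : ¬ DenseRange fun n : ℕ => w ^ n * z := by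
  intro h
  have mem_of_isClosed : ∀ s : Set K, IsClosed s → (∀ n : ℕ, w ^ n * z ∈ s) → ∀ y, y ∈ s :=
    fun s hs hsub y => hs.closure_subset_iff.mpr (Set.range_subset_iff.mpr hsub)
      (h.closure_range ▸ Set.mem_univ y)
  have hz : ‖z‖ ≤ ‖(0 : K)‖ :=
    mem_of_isClosed {y | ‖z‖ ≤ ‖y‖} (isClosed_le continuous_const continuous_norm)
      (fun n => show ‖z‖ ≤ ‖w ^ n * z‖ by
        rw [norm_mul, norm_pow]
        exact le_mul_of_one_le_left (norm_nonneg z) (one_le_pow₀ hw)) 0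
  rw [norm_zero, norm_le_zero_iff] at hz
  exact one_ne_zero (mem_of_isClosed {0} isClosed_singleton (fun n => by simp [hz]) 1)

namespace convSeq

variable {𝕜 : Type*} [RCLike 𝕜]

noncomputable def lim (x : convSeq 𝕜) : 𝕜 := limUnder atTop (x : ℕ →ᵇ 𝕜)

theorem tendsto_lim (x : convSeq 𝕜) : Tendsto (x : ℕ →ᵇ 𝕜) atTop (𝓝 (lim x)) :=
  tendsto_nhds_limUnder x.2

theorem lim_eq_of_tendsto {x : convSeq 𝕜} {L : 𝕜} (h : Tendsto (x : ℕ →ᵇ 𝕜) atTop (𝓝 L)) :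
    lim x = L :=
  h.limUnder_eq

theorem dist_lim_le (x y : convSeq 𝕜) : dist (lim x) (lim y) ≤ dist x y :=
  le_of_tendsto ((tendsto_lim x).dist (tendsto_lim y))
    (Eventually.of_forall fun k => dist_coe_le_dist k)

theorem lipschitzWith_lim : LipschitzWith 1 (lim : convSeq 𝕜 → 𝕜) :=
  LipschitzWith.of_dist_le_mul fun x y => by simpa using dist_lim_le x y

def const (a : 𝕜) : convSeq 𝕜 := ⟨BoundedContinuousFunction.const ℕ a, a, tendsto_const_nhds⟩

theorem lim_const (a : 𝕜) : lim (const a) = a :=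
  lim_eq_of_tendsto tendsto_const_nhds

theorem lim_surjective : Function.Surjective (lim : convSeq 𝕜 → 𝕜) :=
  fun a => ⟨const a, lim_const a⟩

theorem lim_apply_of_shift {w : 𝕜} {f : convSeq 𝕜 → convSeq 𝕜}
    (hf : ∀ (x : convSeq 𝕜) (k : ℕ), (f x : ℕ →ᵇ 𝕜) k = w * (x : ℕ →ᵇ 𝕜) (k + 1))
    (x : convSeq 𝕜) : lim (f x) = w * lim x :=
  lim_eq_of_tendsto <| (((tendsto_lim x).comp (tendsto_add_atTop_nat 1)).const_mul w).congr
    fun k => (hf x k).symm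

theorem lim_pow_apply_of_shift {w : 𝕜} {A : convSeq 𝕜 →L[𝕜] convSeq 𝕜}
    (hA : ∀ (x : convSeq 𝕜) (k : ℕ), (A x : ℕ →ᵇ 𝕜) k = w * (x : ℕ →ᵇ 𝕜) (k + 1))
    (n : ℕ) (x : convSeq 𝕜) : lim ((A ^ n) x) = w ^ n * lim x := by
  induction n with
  | zero => simp
  | succ n ih =>
    rw [pow_succ']
    change lim (A ((A ^ n) x)) = _
    rw [lim_apply_of_shift hA, ih, pow_succ', mul_assoc]

end convSeq

/-- For every `w` with `‖w‖ > 1`, the bounded weighted backward shift `A_w`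
on the space `c` of convergent sequences, `(A_w x) k = w * x (k+1)`, is not hypercyclic:
no `x ∈ c` has dense orbit `{A_wⁿ x : n ≥ 0}` in `c`. -/
theorem bounded_backward_shift_on_c_not_hypercyclic
    (𝕜 : Type*) [RCLike 𝕜] (w : 𝕜) (hw : 1 < ‖w‖)
    (A : convSeq 𝕜 →L[𝕜] convSeq 𝕜)
    (hA : ∀ (x : convSeq 𝕜) (k : ℕ), (A x : ℕ →ᵇ 𝕜) k = w * (x : ℕ →ᵇ 𝕜) (k + 1)) :
    ¬ ∃ x : convSeq 𝕜, Dense (Set.range fun n : ℕ => (A ^ n) x) := by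
  rintro ⟨x, hx⟩
  have hlim : DenseRange fun n : ℕ => convSeq.lim ((A ^ n) x) :=
    convSeq.lim_surjective.denseRange.comp hx convSeq.lipschitzWith_lim.continuous
  simp only [convSeq.lim_pow_apply_of_shift hA] at hlim
  exact not_denseRange_pow_mul hw.le _ hlim
end

section
/- For every w ∈ 𝔽 with |w| > 1, the unbounded weighted backward shift A_w in the space c of convergent sequences, (A_w x)_k = w^k·x_{k+1} with maximal domain D(A_w) = {x ∈ c : (w^k x_{k+1})_{k≥1} ∈ c}, satisfies D(A_w) ⊆ c₀; consequently C^∞(A_w) = ⋂_{n≥1} D(A_wⁿ) is not dense in c, and A_w is not hypercyclic. -/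
open Filter Topology

/-- The set of convergent sequences (the space `c`, as raw sequences; the Lean index `k`
corresponds to the paper's index `k + 1`). -/
def cSet (𝕜 : Type*) [RCLike 𝕜] : Set (ℕ → 𝕜) :=
  {x | ∃ L : 𝕜, Tendsto x atTop (nhds L)}

/-- The maximal domain of `A_w` in `c`: `D(A_w) = {x ∈ c : A_w x ∈ c}`. -/
def shiftDomC {𝕜 : Type*} [RCLike 𝕜] (w : 𝕜) : Set (ℕ → 𝕜) :=
  {x | x ∈ cSet 𝕜 ∧ shiftAct w x ∈ cSet 𝕜}

/-- The recursively defined domain of the `n`-th power: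
`D(A_wⁿ) = {x : A_w^m x ∈ D(A_w) for all m < n}`. -/
def shiftDomCPow {𝕜 : Type*} [RCLike 𝕜] (w : 𝕜) (n : ℕ) : Set (ℕ → 𝕜) :=
  {x | ∀ m < n, (shiftAct w)^[m] x ∈ shiftDomC w}

/-!
If `x → L` and `(w^k x_k)` converges with `‖w‖ > 1`, then `L = 0`, since otherwise
`‖w^k x_k‖ ~ ‖w‖^k ‖L‖` is unbounded. So every vector of `D(A_w)`, and hence every
`A_wⁿ x` with `x ∈ C^∞(A_w)`, lies in `c₀`, at sup-distance at least `1` from the constant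
sequence `1`. This rules out both density of `C^∞(A_w)` and hypercyclicity.
-/

lemma eq_zero_of_tendsto_of_tendsto_pow_mul {𝕜 : Type*} [NormedDivisionRing 𝕜]
    {w L M : 𝕜} {x : ℕ → 𝕜} (hw : 1 < ‖w‖) (hx : Tendsto x atTop (𝓝 L))
    (hwx : Tendsto (fun k => w ^ k * x k) atTop (𝓝 M)) : L = 0 := by
  by_contra hL
  have hunbounded : Tendsto (fun k => ‖w ^ k * x k‖) atTop atTop := by
    simpa only [norm_mul, norm_pow] using
      (tendsto_pow_atTop_atTop_of_one_lt hw).atTop_mul_pos (norm_pos_iff.mpr hL) hx.norm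
  exact not_tendsto_atTop_of_tendsto_nhds hwx.norm hunbounded

lemma le_supNorm_sub_of_tendsto {𝕜 : Type*} [RCLike 𝕜] {z y : ℕ → 𝕜} {a b : 𝕜}
    (hz : Tendsto z atTop (𝓝 a)) (hy : Tendsto y atTop (𝓝 b)) :
    ‖a - b‖ ≤ supNorm (z - y) := by
  have h : Tendsto (fun k => ‖(z - y) k‖) atTop (𝓝 ‖a - b‖) := (hz.sub hy).norm
  exact le_of_tendsto' h fun k => le_ciSup h.bddAbove_range k

section

variable {𝕜 : Type*} [RCLike 𝕜] {w : 𝕜}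

theorem shiftDomC_subset_c0Set (hw : 1 < ‖w‖) : shiftDomC w ⊆ c0Set 𝕜 := by
  rintro x ⟨⟨L, hL⟩, ⟨M, hM⟩⟩
  have hwx : Tendsto (fun k => w ^ k * x k) atTop (𝓝 M) :=
    (tendsto_add_atTop_iff_nat 1).mp hM
  obtain rfl := eq_zero_of_tendsto_of_tendsto_pow_mul hw hL hwx
  exact hL

lemma one_le_supNorm_sub_one_of_mem_shiftDomC (hw : 1 < ‖w‖) {z : ℕ → 𝕜}
    (hz : z ∈ shiftDomC w) : 1 ≤ supNorm (z - fun _ => 1) := by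
  simpa using le_supNorm_sub_of_tendsto (shiftDomC_subset_c0Set hw hz)
    (tendsto_const_nhds (x := (1 : 𝕜)))

end

/-- For every `w` with `‖w‖ > 1`, the unbounded weighted backward shift
`A_w` in the space `c` of convergent sequences satisfies `D(A_w) ⊆ c₀`; consequently
`C^∞(A_w) = ⋂_{n ≥ 1} D(A_wⁿ)` is not dense in `c` (w.r.t. the sup-norm), and `A_w` is not
hypercyclic. -/
theorem unbounded_backward_shift_in_c_not_hypercyclic
    (𝕜 : Type*) [RCLike 𝕜] (w : 𝕜) (hw : 1 < ‖w‖) :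
    shiftDomC w ⊆ c0Set 𝕜 ∧
    ¬ (∀ y ∈ cSet 𝕜, ∀ ε > (0 : ℝ),
        ∃ x : ℕ → 𝕜, (∀ n : ℕ, 1 ≤ n → x ∈ shiftDomCPow w n) ∧ supNorm (x - y) < ε) ∧
    ¬ ∃ x : ℕ → 𝕜, (∀ n : ℕ, 1 ≤ n → x ∈ shiftDomCPow w n) ∧
        ∀ y ∈ cSet 𝕜, ∀ ε > (0 : ℝ), ∃ n : ℕ, supNorm ((shiftAct w)^[n] x - y) < ε := by
  have far : ∀ z ∈ shiftDomC w, ¬ supNorm (z - fun _ => (1 : 𝕜)) < 1 := fun z hz =>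
    not_lt.mpr (one_le_supNorm_sub_one_of_mem_shiftDomC hw hz)
  refine ⟨shiftDomC_subset_c0Set hw, fun hdense => ?_, fun ⟨x, hx, hcyc⟩ => ?_⟩
  · obtain ⟨x, hx, hclose⟩ := hdense _ ⟨1, tendsto_const_nhds⟩ 1 one_pos
    exact far x (hx 1 le_rfl 0 one_pos) hclose
  · obtain ⟨n, hclose⟩ := hcyc _ ⟨1, tendsto_const_nhds⟩ 1 one_pos
    exact far _ (hx (n + 1) n.succ_pos n n.lt_succ_self) hclose
end

section
/- For every w ∈ ℂ with |w| > 1, the bounded operator Â_w on the complex space c, (Â_w x)_k = w·(x_{k+1} + x_1 − 2l(x)), has spectrum σ(Â_w) = {λ ∈ ℂ : |λ| ≤ |w|}, point spectrum σ_p(Â_w) = {λ ∈ ℂ : |λ| < |w|}, and continuous spectrum σ_c(Â_w) = {λ ∈ ℂ : |λ| = |w|} (i.e., for |λ| = |w|, Â_w − λI is injective, not surjective, with dense range). -/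
open Filter Topology BoundedContinuousFunction

/-- The complex space `c` of convergent sequences, as a submodule of the bounded sequences
`ℕ →ᵇ ℂ` with the sup-norm (the Lean index `k` corresponds to the paper's index `k + 1`,
so the paper's first entry `x_1` is `x 0`). -/
noncomputable def convSeqC : Submodule ℂ (ℕ →ᵇ ℂ) where
  carrier := {x | ∃ L : ℂ, Tendsto ⇑x atTop (nhds L)}
  add_mem' := by
    rintro x y ⟨Lx, hx⟩ ⟨Ly, hy⟩
    exact ⟨Lx + Ly, by rw [BoundedContinuousFunction.coe_add]; exact hx.add hy⟩
  zero_mem' := ⟨0, by rw [BoundedContinuousFunction.coe_zero]; exact tendsto_const_nhds⟩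
  smul_mem' := by
    rintro c x ⟨L, hx⟩
    exact ⟨c • L, by simpa using hx.const_smul c⟩

/-!
Write `μ = z / w`. The equation `(A - z) x = y` is the recurrence
`x (k+1) = μ x k + y k / w + (2 l x - x 0)`; passing to the limit, `u = x - l x` satisfies
`u (k+1) = μ u k + v k` with `v = (y - l y) / w` and `u → 0`, and conversely, for `μ ≠ 0`,
every such `u` yields a preimage of `y`.

* `|μ| ≥ 1`, `y = 0`: the norms `‖u k‖` are nondecreasing and tend to `0`, so `u = 0`, and then
  `x = 0`.
* `|μ| < 1`: `x k = 1 + μ ^ (k+1)` is an eigenvector.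
* `|μ| > 1`: running the recurrence backwards from infinity,
  `u k = -∑ j, v (k+j) / μ ^ (j+1)`, gives a solution tending to `0` for every `y`.
  When `y - l y` is eventually zero the same sum is finite, so for every `μ ≠ 0` the range
  contains these `y`, which are dense.
* `|μ| = 1`: for `y k = μ ^ (k+1) / (k+1)` one gets `u k = μ ^ k (u 0 + H k / w)` with `H` the
  harmonic numbers, which is unbounded.

Since `c` is closed in `ℓ^∞`, it is complete and the open mapping theorem identifies the
spectrum with the set where `A - z` is not bijective.
-/

theorem isClosed_convSeqC : IsClosed (convSeqC : Set (ℕ →ᵇ ℂ)) := by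
  refine isClosed_of_closure_subset fun x hx => ?_
  refine cauchySeq_tendsto_of_complete (Metric.cauchySeq_iff.2 fun ε hε => ?_)
  obtain ⟨g, ⟨L, hg⟩, hxg⟩ := Metric.mem_closure_iff.1 hx (ε / 3) (by positivity)
  obtain ⟨N, hN⟩ := Metric.cauchySeq_iff.1 hg.cauchySeq (ε / 3) (by positivity)
  refine ⟨N, fun m hm n hn => ?_⟩
  calc dist (x m) (x n) ≤ dist (x m) (g m) + dist (g m) (g n) + dist (g n) (x n) :=
        dist_triangle4 _ _ _ _
    _ < ε / 3 + ε / 3 + ε / 3 := by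
        rw [dist_comm (g n)]
        exact add_lt_add (add_lt_add ((dist_coe_le_dist m).trans_lt hxg) (hN m hm n hn))
          ((dist_coe_le_dist n).trans_lt hxg)
    _ = ε := by ring

instance : CompleteSpace convSeqC := isClosed_convSeqC.completeSpace_coe

theorem eq_mul_add_of_tendsto_of_recurrence {μ L D : ℂ} {x d : ℕ → ℂ}
    (hx : Tendsto x atTop (𝓝 L)) (hd : Tendsto d atTop (𝓝 D))
    (hrec : ∀ k, x (k + 1) = μ * x k + d k) : L = μ * L + D :=
  tendsto_nhds_unique ((tendsto_add_atTop_iff_nat 1).2 hx)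
    (by simpa only [hrec] using (hx.const_mul μ).add hd)

theorem eq_zero_of_tendsto_zero_of_recurrence {μ : ℂ} {u : ℕ → ℂ} (hμ : 1 ≤ ‖μ‖)
    (hu : Tendsto u atTop (𝓝 0)) (hrec : ∀ k, u (k + 1) = μ * u k) (k : ℕ) : u k = 0 := by
  have hmono : Monotone fun k => ‖u k‖ := monotone_nat_of_le_succ fun k => by
    rw [hrec, norm_mul]; exact le_mul_of_one_le_left (norm_nonneg _) hμ
  exact norm_le_zero_iff.1 (hmono.ge_of_tendsto (by simpa using hu.norm) k)

theorem eq_pow_mul_harmonic_of_recurrence {μ a : ℂ} {u : ℕ → ℂ}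
    (hrec : ∀ k, u (k + 1) = μ * u k + a * (μ ^ (k + 1) / (k + 1))) (k : ℕ) :
    u k = μ ^ k * (u 0 + a * ∑ j ∈ Finset.range k, (1 / (j + 1) : ℝ)) := by
  induction k with
  | zero => simp
  | succ k ih =>
    rw [hrec, ih, Finset.sum_range_succ]
    push_cast
    ring

theorem not_tendsto_zero_of_recurrence_harmonic {μ a : ℂ} {u : ℕ → ℂ} (hμ : ‖μ‖ = 1)
    (ha : a ≠ 0) (hrec : ∀ k, u (k + 1) = μ * u k + a * (μ ^ (k + 1) / (k + 1))) :
    ¬ Tendsto u atTop (𝓝 0) := by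
  intro hu
  set H : ℕ → ℝ := fun k => ∑ j ∈ Finset.range k, (1 / (j + 1) : ℝ)
  have hH : Tendsto (fun k => ‖a‖ * H k - ‖u 0‖) atTop atTop :=
    tendsto_atTop_add_const_right _ _
      (Real.tendsto_sum_range_one_div_nat_succ_atTop.const_mul_atTop (norm_pos_iff.2 ha))
  have hle : ∀ k, ‖a‖ * H k - ‖u 0‖ ≤ ‖u k‖ := fun k => by
    have hH0 : 0 ≤ H k := Finset.sum_nonneg fun j _ => by positivity
    rw [eq_pow_mul_harmonic_of_recurrence hrec k, norm_mul, norm_pow, hμ, one_pow, one_mul]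
    have := norm_sub_le (u 0 + a * (H k : ℂ)) (u 0)
    rw [add_sub_cancel_left, norm_mul, Complex.norm_real, Real.norm_of_nonneg hH0] at this
    linarith
  exact not_tendsto_atTop_of_tendsto_nhds hu.norm (tendsto_atTop_mono hle hH)

noncomputable def backwardSolution (μ : ℂ) (v : ℕ → ℂ) (k : ℕ) : ℂ :=
  -∑' j, v (k + j) / μ ^ (j + 1)

theorem backwardSolution_succ {μ : ℂ} {v : ℕ → ℂ} (hμ : μ ≠ 0) {k : ℕ}
    (hs : Summable fun j => v (k + j) / μ ^ (j + 1)) :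
    backwardSolution μ v (k + 1) = μ * backwardSolution μ v k + v k := by
  have hshift : ∑' j, v (k + (j + 1)) / μ ^ (j + 1 + 1)
      = (∑' j, v (k + 1 + j) / μ ^ (j + 1)) / μ := by
    rw [← tsum_div_const]
    exact tsum_congr fun j => by rw [← add_assoc, add_right_comm k, pow_succ, div_div]
  simp only [backwardSolution]
  rw [hs.tsum_eq_zero_add, hshift]
  field_simp
  simp

theorem norm_div_pow_succ_le {μ : ℂ} {v : ℕ → ℂ} {B : ℝ} (hB : ∀ k, ‖v k‖ ≤ B) (k j : ℕ) :
    ‖v (k + j) / μ ^ (j + 1)‖ ≤ B * ‖μ‖⁻¹ ^ (j + 1) := by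
  rw [norm_div, norm_pow, div_eq_mul_inv, inv_pow]
  gcongr
  exact hB _

theorem summable_geometric_succ {ρ : ℝ} (h0 : 0 ≤ ρ) (h1 : ρ < 1) (B : ℝ) :
    Summable fun j : ℕ => B * ρ ^ (j + 1) :=
  ((summable_nat_add_iff 1).2 (summable_geometric_of_lt_one h0 h1)).mul_left B

theorem tendsto_backwardSolution_of_one_lt_norm {μ : ℂ} {v : ℕ → ℂ} (hμ : 1 < ‖μ‖)
    (hv : Tendsto v atTop (𝓝 0)) : Tendsto (backwardSolution μ v) atTop (𝓝 0) := by
  have hB : ∀ k, ‖v k‖ ≤ ⨆ k, ‖v k‖ := le_ciSup hv.norm.bddAbove_range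
  have hρ : ‖μ‖⁻¹ < 1 := inv_lt_one_of_one_lt₀ hμ
  have hterm : ∀ j, Tendsto (fun k => v (k + j) / μ ^ (j + 1)) atTop (𝓝 0) := fun j => by
    simpa using (hv.comp (tendsto_add_atTop_nat j)).div_const (μ ^ (j + 1))
  have := tendsto_tsum_of_dominated_convergence
    (summable_geometric_succ (by positivity) hρ _) hterm
    (Eventually.of_forall (norm_div_pow_succ_le hB))
  show Tendsto (fun k => -∑' j, v (k + j) / μ ^ (j + 1)) atTop (𝓝 0)
  simpa using this.neg

theorem backwardSolution_eq_zero {μ : ℂ} {v : ℕ → ℂ} {N : ℕ} (hv : ∀ k, N ≤ k → v k = 0)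
    {k : ℕ} (hk : N ≤ k) : backwardSolution μ v k = 0 := by
  simp [backwardSolution, hv _ (hk.trans (Nat.le_add_right k _))]

theorem backwardSolution_succ_of_one_lt_norm {μ : ℂ} {v : ℕ → ℂ} (hμ : 1 < ‖μ‖)
    (hv : Tendsto v atTop (𝓝 0)) (k : ℕ) :
    backwardSolution μ v (k + 1) = μ * backwardSolution μ v k + v k :=
  backwardSolution_succ (norm_pos_iff.1 (one_pos.trans hμ))
    ((summable_geometric_succ (by positivity) (inv_lt_one_of_one_lt₀ hμ) _).of_norm_bounded
      (norm_div_pow_succ_le (le_ciSup hv.norm.bddAbove_range) k))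

theorem backwardSolution_succ_of_eventually_eq_zero {μ : ℂ} {v : ℕ → ℂ} (hμ : μ ≠ 0) {N : ℕ}
    (hv : ∀ k, N ≤ k → v k = 0) (k : ℕ) :
    backwardSolution μ v (k + 1) = μ * backwardSolution μ v k + v k :=
  backwardSolution_succ hμ <| summable_of_ne_finset_zero (s := Finset.range N) fun j hj => by
    rw [hv _ ((not_lt.1 (Finset.mem_range.not.1 hj)).trans (Nat.le_add_left j k)), zero_div]

section Spectrum

variable {𝕜 E : Type*} [NontriviallyNormedField 𝕜] [NormedAddCommGroup E] [NormedSpace 𝕜 E]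

theorem ContinuousLinearMap.exists_ne_zero_apply_eq_smul_iff (T : E →L[𝕜] E) (z : 𝕜) :
    (∃ x, x ≠ 0 ∧ T x = z • x) ↔ ¬ Function.Injective (T - z • (1 : E →L[𝕜] E)) := by
  rw [injective_iff_map_eq_zero]
  simp [sub_eq_zero, and_comm]

theorem ContinuousLinearMap.mem_spectrum_iff_not_bijective [CompleteSpace E] (T : E →L[𝕜] E)
    (z : 𝕜) : z ∈ spectrum 𝕜 T ↔ ¬ Function.Bijective (T - z • (1 : E →L[𝕜] E)) := by
  rw [spectrum.mem_iff, Algebra.algebraMap_eq_smul_one, ← neg_sub, IsUnit.neg_iff,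
    isUnit_iff_bijective]

end Spectrum

namespace convSeqC

noncomputable def ofTendsto {f : ℕ → ℂ} {L : ℂ} (hf : Tendsto f atTop (𝓝 L)) : convSeqC :=
  ⟨ofNormedAddCommGroupDiscrete f (⨆ k, ‖f k‖) (le_ciSup hf.norm.bddAbove_range), L, hf⟩

@[simp]
theorem ofTendsto_apply {f : ℕ → ℂ} {L : ℂ} (hf : Tendsto f atTop (𝓝 L)) (k : ℕ) :
    (ofTendsto hf : ℕ →ᵇ ℂ) k = f k :=
  rfl

variable {w : ℂ} {l : convSeqC → ℂ} {A : convSeqC →L[ℂ] convSeqC}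

theorem limit_ofTendsto
    (hl : ∀ x : convSeqC, Tendsto (fun k : ℕ => (x : ℕ →ᵇ ℂ) k) atTop (nhds (l x)))
    {f : ℕ → ℂ} {L : ℂ} (hf : Tendsto f atTop (𝓝 L)) : l (ofTendsto hf) = L :=
  tendsto_nhds_unique (hl _) hf

theorem sub_smul_one_apply_eq_iff (hw : w ≠ 0)
    (hA : ∀ (x : convSeqC) (k : ℕ),
      (A x : ℕ →ᵇ ℂ) k = w * ((x : ℕ →ᵇ ℂ) (k + 1) + (x : ℕ →ᵇ ℂ) 0 - 2 * l x))
    (z : ℂ) (X Y : convSeqC) :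
    (A - z • (1 : convSeqC →L[ℂ] convSeqC)) X = Y ↔ ∀ k, (X : ℕ →ᵇ ℂ) (k + 1) =
      z / w * (X : ℕ →ᵇ ℂ) k + ((Y : ℕ →ᵇ ℂ) k / w + (2 * l X - (X : ℕ →ᵇ ℂ) 0)) := by
  rw [Subtype.ext_iff, BoundedContinuousFunction.ext_iff]
  refine forall_congr' fun k => ?_
  have happ : ((A - z • (1 : convSeqC →L[ℂ] convSeqC)) X : ℕ →ᵇ ℂ) k
      = w * ((X : ℕ →ᵇ ℂ) (k + 1) + (X : ℕ →ᵇ ℂ) 0 - 2 * l X) - z * (X : ℕ →ᵇ ℂ) k := by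
    simp [hA]
  rw [happ]
  constructor <;> intro h
  · field_simp
    linear_combination h
  · rw [h]
    field_simp
    ring

theorem sub_limit_recurrence_of_sub_smul_one_apply_eq (hw : w ≠ 0)
    (hl : ∀ x : convSeqC, Tendsto (fun k : ℕ => (x : ℕ →ᵇ ℂ) k) atTop (nhds (l x)))
    (hA : ∀ (x : convSeqC) (k : ℕ),
      (A x : ℕ →ᵇ ℂ) k = w * ((x : ℕ →ᵇ ℂ) (k + 1) + (x : ℕ →ᵇ ℂ) 0 - 2 * l x))
    {z : ℂ} {X Y : convSeqC} (h : (A - z • (1 : convSeqC →L[ℂ] convSeqC)) X = Y) (k : ℕ) :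
    (X : ℕ →ᵇ ℂ) (k + 1) - l X = z / w * ((X : ℕ →ᵇ ℂ) k - l X) + ((Y : ℕ →ᵇ ℂ) k - l Y) / w := by
  have hrec := (sub_smul_one_apply_eq_iff hw hA z X Y).1 h
  have hlim := eq_mul_add_of_tendsto_of_recurrence (hl X)
    (((hl Y).div_const w).add_const (2 * l X - (X : ℕ →ᵇ ℂ) 0)) hrec
  linear_combination hrec k - hlim

theorem mem_range_sub_smul_one_of_recurrence (hw : w ≠ 0)
    (hl : ∀ x : convSeqC, Tendsto (fun k : ℕ => (x : ℕ →ᵇ ℂ) k) atTop (nhds (l x)))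
    (hA : ∀ (x : convSeqC) (k : ℕ),
      (A x : ℕ →ᵇ ℂ) k = w * ((x : ℕ →ᵇ ℂ) (k + 1) + (x : ℕ →ᵇ ℂ) 0 - 2 * l x))
    {z : ℂ} (hz : z ≠ 0) (Y : convSeqC) {u : ℕ → ℂ} (hu : Tendsto u atTop (𝓝 0))
    (hrec : ∀ k, u (k + 1) = z / w * u k + ((Y : ℕ →ᵇ ℂ) k - l Y) / w) :
    Y ∈ Set.range (A - z • (1 : convSeqC →L[ℂ] convSeqC)) := by
  set L := (u 0 - l Y / w) / (z / w)
  have hL : z / w * L = u 0 - l Y / w := mul_div_cancel₀ _ (div_ne_zero hz hw)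
  have hX : Tendsto (fun k => u k + L) atTop (𝓝 L) := by simpa using hu.add_const L
  refine ⟨ofTendsto hX, (sub_smul_one_apply_eq_iff hw hA z _ Y).2 fun k => ?_⟩
  rw [limit_ofTendsto hl hX]
  simp only [ofTendsto_apply, hrec]
  linear_combination -hL

theorem injective_sub_smul_one (hw : w ≠ 0)
    (hl : ∀ x : convSeqC, Tendsto (fun k : ℕ => (x : ℕ →ᵇ ℂ) k) atTop (nhds (l x)))
    (hA : ∀ (x : convSeqC) (k : ℕ),
      (A x : ℕ →ᵇ ℂ) k = w * ((x : ℕ →ᵇ ℂ) (k + 1) + (x : ℕ →ᵇ ℂ) 0 - 2 * l x))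
    {z : ℂ} (hz : ‖w‖ ≤ ‖z‖) : Function.Injective (A - z • (1 : convSeqC →L[ℂ] convSeqC)) := by
  rw [injective_iff_map_eq_zero]
  intro X hX
  have hμ : 1 ≤ ‖z / w‖ := by rwa [norm_div, one_le_div (norm_pos_iff.2 hw)]
  have hl0 : l 0 = 0 := tendsto_nhds_unique (hl 0) (by simp)
  have hconst : ∀ k, (X : ℕ →ᵇ ℂ) k = l X := fun k => sub_eq_zero.1 <|
    eq_zero_of_tendsto_zero_of_recurrence hμ (by simpa using (hl X).sub_const (l X))
      (fun k => by simpa [hl0] using sub_limit_recurrence_of_sub_smul_one_apply_eq hw hl hA hX k) k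
  have h0 := (sub_smul_one_apply_eq_iff hw hA z X 0).1 hX 0
  rw [hconst 1, hconst 0, ZeroMemClass.coe_zero, BoundedContinuousFunction.coe_zero,
    Pi.zero_apply, zero_div, zero_add] at h0
  have hz0 : z ≠ 0 := norm_pos_iff.1 ((norm_pos_iff.2 hw).trans_le hz)
  have hL : l X = 0 := (mul_eq_zero.1 (by linear_combination -h0 : z / w * l X = 0)).resolve_left
    (div_ne_zero hz0 hw)
  ext k
  simp [hconst, hL]

theorem not_injective_sub_smul_one (hw : w ≠ 0)
    (hl : ∀ x : convSeqC, Tendsto (fun k : ℕ => (x : ℕ →ᵇ ℂ) k) atTop (nhds (l x)))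
    (hA : ∀ (x : convSeqC) (k : ℕ),
      (A x : ℕ →ᵇ ℂ) k = w * ((x : ℕ →ᵇ ℂ) (k + 1) + (x : ℕ →ᵇ ℂ) 0 - 2 * l x))
    {z : ℂ} (hz : ‖z‖ < ‖w‖) : ¬ Function.Injective (A - z • (1 : convSeqC →L[ℂ] convSeqC)) := by
  have hμ : ‖z / w‖ < 1 := by rwa [norm_div, div_lt_one (norm_pos_iff.2 hw)]
  have hX : Tendsto (fun k => 1 + (z / w) ^ (k + 1)) atTop (𝓝 1) := by
    simpa using ((tendsto_pow_atTop_nhds_zero_of_norm_lt_one hμ).comp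
      (tendsto_add_atTop_nat 1)).const_add 1
  rw [injective_iff_map_eq_zero]
  push Not
  refine ⟨ofTendsto hX, (sub_smul_one_apply_eq_iff hw hA z _ 0).2 fun k => ?_, ?_⟩
  · rw [limit_ofTendsto hl hX]
    simp only [ofTendsto_apply, ZeroMemClass.coe_zero, BoundedContinuousFunction.coe_zero,
      Pi.zero_apply]
    ring
  · intro h0
    have h1 : 1 + (z / w) ^ (0 + 1) = 0 := by
      simpa using congrArg (fun x : convSeqC => (x : ℕ →ᵇ ℂ) 0) h0
    rw [zero_add, pow_one, add_eq_zero_iff_eq_neg'] at h1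
    simp [h1] at hμ

theorem surjective_sub_smul_one (hw : w ≠ 0)
    (hl : ∀ x : convSeqC, Tendsto (fun k : ℕ => (x : ℕ →ᵇ ℂ) k) atTop (nhds (l x)))
    (hA : ∀ (x : convSeqC) (k : ℕ),
      (A x : ℕ →ᵇ ℂ) k = w * ((x : ℕ →ᵇ ℂ) (k + 1) + (x : ℕ →ᵇ ℂ) 0 - 2 * l x))
    {z : ℂ} (hz : ‖w‖ < ‖z‖) : Function.Surjective (A - z • (1 : convSeqC →L[ℂ] convSeqC)) := by
  intro Y
  have hμ : 1 < ‖z / w‖ := by rwa [norm_div, one_lt_div (norm_pos_iff.2 hw)]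
  have hv : Tendsto (fun k => ((Y : ℕ →ᵇ ℂ) k - l Y) / w) atTop (𝓝 0) := by
    simpa using ((hl Y).sub_const (l Y)).div_const w
  have hz0 : z ≠ 0 := norm_pos_iff.1 ((norm_pos_iff.2 hw).trans hz)
  exact mem_range_sub_smul_one_of_recurrence hw hl hA hz0 Y
    (tendsto_backwardSolution_of_one_lt_norm hμ hv) (backwardSolution_succ_of_one_lt_norm hμ hv)

theorem not_surjective_sub_smul_one (hw : w ≠ 0)
    (hl : ∀ x : convSeqC, Tendsto (fun k : ℕ => (x : ℕ →ᵇ ℂ) k) atTop (nhds (l x)))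
    (hA : ∀ (x : convSeqC) (k : ℕ),
      (A x : ℕ →ᵇ ℂ) k = w * ((x : ℕ →ᵇ ℂ) (k + 1) + (x : ℕ →ᵇ ℂ) 0 - 2 * l x))
    {z : ℂ} (hz : ‖z‖ = ‖w‖) : ¬ Function.Surjective (A - z • (1 : convSeqC →L[ℂ] convSeqC)) := by
  have hμ : ‖z / w‖ = 1 := by rw [norm_div, hz, div_self (norm_ne_zero_iff.2 hw)]
  have hY : Tendsto (fun k : ℕ => (z / w) ^ (k + 1) / (k + 1)) atTop (𝓝 0) := by
    refine squeeze_zero_norm (fun k => le_of_eq ?_) tendsto_one_div_add_atTop_nhds_zero_nat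
    rw [norm_div, norm_pow, hμ, one_pow]
    norm_cast
  intro hsurj
  obtain ⟨X, hX⟩ := hsurj (ofTendsto hY)
  refine not_tendsto_zero_of_recurrence_harmonic hμ (inv_ne_zero hw) (fun k => ?_)
    (by simpa using (hl X).sub_const (l X))
  rw [sub_limit_recurrence_of_sub_smul_one_apply_eq hw hl hA hX k, limit_ofTendsto hl hY]
  simp only [ofTendsto_apply]
  ring

theorem denseRange_sub_smul_one (hw : w ≠ 0)
    (hl : ∀ x : convSeqC, Tendsto (fun k : ℕ => (x : ℕ →ᵇ ℂ) k) atTop (nhds (l x)))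
    (hA : ∀ (x : convSeqC) (k : ℕ),
      (A x : ℕ →ᵇ ℂ) k = w * ((x : ℕ →ᵇ ℂ) (k + 1) + (x : ℕ →ᵇ ℂ) 0 - 2 * l x))
    {z : ℂ} (hz : z ≠ 0) : DenseRange (A - z • (1 : convSeqC →L[ℂ] convSeqC)) := by
  rw [DenseRange, Metric.dense_iff]
  intro Y r hr
  obtain ⟨N, hN⟩ := Metric.tendsto_atTop.1 (hl Y) (r / 2) (half_pos hr)
  set f : ℕ → ℂ := fun k => if k < N then (Y : ℕ →ᵇ ℂ) k else l Y
  have hf : Tendsto f atTop (𝓝 (l Y)) := tendsto_const_nhds.congr' <|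
    (eventually_ge_atTop N).mono fun k hk => by simp [f, not_lt.2 hk]
  set Y' := ofTendsto hf
  have hv : ∀ k, N ≤ k → ((Y' : ℕ →ᵇ ℂ) k - l Y') / w = 0 := fun k hk => by
    simp [Y', f, not_lt.2 hk, limit_ofTendsto hl hf]
  refine ⟨Y', ?_, mem_range_sub_smul_one_of_recurrence hw hl hA hz Y'
    (tendsto_const_nhds.congr' ((eventually_ge_atTop N).mono fun k hk =>
      (backwardSolution_eq_zero hv hk).symm))
    (backwardSolution_succ_of_eventually_eq_zero (div_ne_zero hz hw) hv)⟩
  refine Metric.mem_ball.2 (((dist_le (half_pos hr).le).2 fun k => ?_).trans_lt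
    (half_lt_self hr))
  by_cases hk : k < N
  · simp [Y', f, hk, (half_pos hr).le]
  · simpa [Y', f, hk, dist_comm] using (hN k (not_lt.1 hk)).le

end convSeqC

/-- For every `w ∈ ℂ` with `|w| > 1`, the bounded operator `Â_w` on the
complex space `c`, `(Â_w x)_k = w (x_{k+1} + x_1 - 2 l(x))`, has spectrum
`{λ : |λ| ≤ |w|}`, point spectrum `{λ : |λ| < |w|}`, and continuous spectrum
`{λ : |λ| = |w|}` (i.e. for `|λ| = |w|`, `Â_w - λI` is injective, not surjective, with
dense range). -/
theorem bounded_operator_on_c_spectrum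
    (w : ℂ) (hw : 1 < ‖w‖)
    (l : convSeqC → ℂ)
    (hl : ∀ x : convSeqC, Tendsto (fun k : ℕ => (x : ℕ →ᵇ ℂ) k) atTop (nhds (l x)))
    (A : convSeqC →L[ℂ] convSeqC)
    (hA : ∀ (x : convSeqC) (k : ℕ),
      (A x : ℕ →ᵇ ℂ) k = w * ((x : ℕ →ᵇ ℂ) (k + 1) + (x : ℕ →ᵇ ℂ) 0 - 2 * l x)) :
    spectrum ℂ A = {z : ℂ | ‖z‖ ≤ ‖w‖} ∧
    {z : ℂ | ∃ x : convSeqC, x ≠ 0 ∧ A x = z • x} = {z : ℂ | ‖z‖ < ‖w‖} ∧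
    ∀ z : ℂ, ‖z‖ = ‖w‖ →
      Function.Injective ⇑(A - z • (1 : convSeqC →L[ℂ] convSeqC)) ∧
      ¬ Function.Surjective ⇑(A - z • (1 : convSeqC →L[ℂ] convSeqC)) ∧
      Dense (Set.range ⇑(A - z • (1 : convSeqC →L[ℂ] convSeqC))) := by
  have hw0 : w ≠ 0 := norm_pos_iff.1 (one_pos.trans hw)
  have hinj {z : ℂ} (hz : ‖w‖ ≤ ‖z‖) :
      Function.Injective ⇑(A - z • (1 : convSeqC →L[ℂ] convSeqC)) :=
    convSeqC.injective_sub_smul_one hw0 hl hA hz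
  have hnsurj {z : ℂ} (hz : ‖z‖ = ‖w‖) :
      ¬ Function.Surjective ⇑(A - z • (1 : convSeqC →L[ℂ] convSeqC)) :=
    convSeqC.not_surjective_sub_smul_one hw0 hl hA hz
  have hpoint (z : ℂ) :
      ¬ Function.Injective ⇑(A - z • (1 : convSeqC →L[ℂ] convSeqC)) ↔ ‖z‖ < ‖w‖ :=
    ⟨fun h => not_le.1 fun hz => h (hinj hz), convSeqC.not_injective_sub_smul_one hw0 hl hA⟩
  refine ⟨Set.ext fun z => ?_, Set.ext fun z => (A.exists_ne_zero_apply_eq_smul_iff z).trans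
    (hpoint z), fun z hz => ⟨hinj hz.ge, hnsurj hz, convSeqC.denseRange_sub_smul_one hw0 hl hA
    (norm_ne_zero_iff.1 (hz ▸ norm_ne_zero_iff.2 hw0))⟩⟩
  rw [A.mem_spectrum_iff_not_bijective]
  rcases lt_trichotomy ‖z‖ ‖w‖ with hlt | heq | hgt
  · exact iff_of_true (fun h => (hpoint z).2 hlt h.1) hlt.le
  · exact iff_of_true (fun h => hnsurj heq h.2) heq.le
  · exact iff_of_false (not_not.2 ⟨hinj hgt.le, convSeqC.surjective_sub_smul_one hw0 hl hA hgt⟩)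
      (not_le.2 hgt)
end

section
/- For every w ∈ 𝔽 with |w| > 1, the linear operator Â_w in c defined by (Â_w x)_k = w^k·(x_{k+1} − l(x)) + x_1 − l(x) on the domain D(Â_w) = {x ∈ c : (w^k(x_{k+1} − l(x)))_{k≥1} ∈ c₀} is unbounded, closed, and chaotic (it has a hypercyclic vector in ⋂_{n≥1} D(Â_wⁿ) and a dense set of periodic points); moreover, every λ ∈ 𝔽 is an eigenvalue of Â_w of geometric multiplicity 1, i.e., dim ker(Â_w − λI) = 1. -/
open Filter Topology

/-- The action of the operator `Â_w` in `c`: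
`(Â_w x)_k = w^k (x_{k+1} - l(x)) + x_1 - l(x)` for the paper's `1`-based `k ≥ 1`, i.e.
`(Â_w x) k = w^(k+1) * (x (k+1) - l(x)) + (x 0 - l(x))` in `0`-based indexing, where `l`
is the limit functional. -/
def hatAct {𝕜 : Type*} [RCLike 𝕜] (w : 𝕜) (l : (ℕ → 𝕜) → 𝕜) (x : ℕ → 𝕜) : ℕ → 𝕜 :=
  fun k => w ^ (k + 1) * (x (k + 1) - l x) + (x 0 - l x)

/-- The domain `D(Â_w) = {x ∈ c : (w^k (x_{k+1} - l(x)))_k ∈ c₀}`. -/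
def hatDom {𝕜 : Type*} [RCLike 𝕜] (w : 𝕜) (l : (ℕ → 𝕜) → 𝕜) : Set (ℕ → 𝕜) :=
  {x | x ∈ cSet 𝕜 ∧
    Tendsto (fun k : ℕ => w ^ (k + 1) * (x (k + 1) - l x)) atTop (nhds (0 : 𝕜))}

/-- The recursively defined domain of the `n`-th power:
`D(Â_wⁿ) = {x : Â_w^m x ∈ D(Â_w) for all m < n}`. -/
def hatDomPow {𝕜 : Type*} [RCLike 𝕜] (w : 𝕜) (l : (ℕ → 𝕜) → 𝕜) (n : ℕ) : Set (ℕ → 𝕜) :=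
  {x | ∀ m < n, (hatAct w l)^[m] x ∈ hatDom w l}

/-!
The map `x ↦ (l x, x₀ - l x, x₁ - l x, …)` carries `c` onto `c₀` and conjugates `Â_w` to the
weighted backward shift `(B v)_k = w^k v_{k+1}`, with `(Bⁿ v)_k = w^(n k + C(n,2)) v_{k+n}`.
Its right inverse, the forward shift `S`, satisfies `‖Sⁿ t‖ ≤ ‖t‖ / ‖w‖^C(n,2)`. So for finitely
supported `t_j` and fast-growing `n_j`, the vector `v = ∑ⱼ S^(n_j) t_j` lies in every `D(Bᵐ)`
and `B^(n_j) v` is `t_j` up to a tail of later blocks that is as small as we like. Letting `t_j`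
run through a countable dense set (each element recurring infinitely often) gives a hypercyclic
vector; `n_j = j N` with `t_j = t` gives a periodic point near `t`. The eigenvectors of `B` for
`λ` are the multiples of `(λ^k / w^C(k,2))_k`, which decays because `C(k,2)` is quadratic.
-/

theorem Nat.choose_two_add (a b : ℕ) : (a + b).choose 2 = a.choose 2 + a * b + b.choose 2 := by
  induction b with
  | zero => simp
  | succ b ih =>
    rw [← add_assoc, Nat.choose_succ_succ', Nat.choose_one_right, ih, Nat.choose_succ_succ',
      Nat.choose_one_right]
    ring

theorem Nat.mul_choose_two_le (d N : ℕ) : d * N.choose 2 ≤ (d * N).choose 2 := by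
  induction d with
  | zero => simp
  | succ d ih =>
    rw [add_mul, add_mul, one_mul, one_mul, Nat.choose_two_add]
    omega

theorem tendsto_pow_choose_two_atTop {r : ℝ} (hr : 1 < r) :
    Tendsto (fun d : ℕ => r ^ d.choose 2) atTop atTop := by
  refine (tendsto_pow_atTop_atTop_of_one_lt hr).comp (tendsto_atTop_atTop.2 fun b => ⟨b + 1, ?_⟩)
  intro d hd
  calc b ≤ (b + 1).choose 2 := by rw [Nat.choose_succ_succ', Nat.choose_one_right]; omega
    _ ≤ d.choose 2 := Nat.choose_le_choose 2 hd

theorem hasSum_ite_geometric (a : ℝ) (s : ℕ) :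
    HasSum (fun j => if s < j then a * (1 / 2) ^ (j - s) else 0) a := by
  rw [← hasSum_nat_add_iff' (s + 1)]
  have hfirst : ∑ i ∈ Finset.range (s + 1), (if s < i then a * (1 / 2) ^ (i - s) else 0) = 0 :=
    Finset.sum_eq_zero fun i hi => if_neg (by rw [Finset.mem_range] at hi; omega)
  have htail : (fun j => if s < j + (s + 1) then a * (1 / 2) ^ (j + (s + 1) - s) else 0) =
      fun j => a / 2 / 2 ^ j := by
    funext j
    rw [if_pos (by omega), show j + (s + 1) - s = j + 1 by omega, pow_succ, div_pow, one_pow]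
    field_simp
  rw [hfirst, sub_zero, htail]
  exact hasSum_geometric_two' a

section Shift

variable {𝕜 : Type*} [Field 𝕜] (w : 𝕜)

def backShift (v : ℕ → 𝕜) : ℕ → 𝕜 := fun k => w ^ k * v (k + 1)

def forwardShift (v : ℕ → 𝕜) : ℕ → 𝕜
  | 0 => 0
  | k + 1 => v k / w ^ k

variable {w}

theorem backShift_iterate_apply (n : ℕ) (v : ℕ → 𝕜) (k : ℕ) :
    (backShift w)^[n] v k = w ^ (n * k + n.choose 2) * v (k + n) := by
  induction n generalizing k with
  | zero => simp
  | succ n ih =>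
    rw [Function.iterate_succ_apply', backShift, ih, ← mul_assoc, ← pow_add,
      Nat.choose_succ_succ', Nat.choose_one_right, add_right_comm k 1 n, add_assoc k]
    ring_nf

theorem leftInverse_backShift_forwardShift (hw : w ≠ 0) :
    Function.LeftInverse (backShift w) (forwardShift w) := fun v => by
  funext k
  simp [backShift, forwardShift, mul_div_cancel₀ _ (pow_ne_zero k hw)]

theorem backShift_iterate_forwardShift_iterate (hw : w ≠ 0) {m n : ℕ} (hmn : m ≤ n)
    (v : ℕ → 𝕜) : (backShift w)^[m] ((forwardShift w)^[n] v) = (forwardShift w)^[n - m] v := by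
  rw [← Nat.add_sub_cancel' hmn, Function.iterate_add_apply, Nat.add_sub_cancel_left]
  exact (leftInverse_backShift_forwardShift hw).iterate m _

theorem forwardShift_iterate_apply_add (hw : w ≠ 0) (n : ℕ) (v : ℕ → 𝕜) (k : ℕ) :
    (forwardShift w)^[n] v (k + n) = v k / w ^ (n * k + n.choose 2) := by
  rw [eq_div_iff (pow_ne_zero _ hw), mul_comm, ← backShift_iterate_apply,
    (leftInverse_backShift_forwardShift hw).iterate n]

theorem forwardShift_iterate_apply_of_lt {n k : ℕ} (h : k < n) (v : ℕ → 𝕜) :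
    (forwardShift w)^[n] v k = 0 := by
  induction n generalizing k with
  | zero => omega
  | succ n ih =>
    rw [Function.iterate_succ_apply']
    cases k with
    | zero => rfl
    | succ k => simp [forwardShift, ih (Nat.lt_of_succ_lt_succ h)]

theorem backShift_iterate_apply_eq_zero {v : ℕ → 𝕜} {K : ℕ} (hv : ∀ k ≥ K, v k = 0) {m k : ℕ}
    (hk : K ≤ k + m) : (backShift w)^[m] v k = 0 := by
  rw [backShift_iterate_apply, hv _ hk, mul_zero]

theorem forwardShift_iterate_apply_eq_zero (hw : w ≠ 0) {v : ℕ → 𝕜} {K : ℕ}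
    (hv : ∀ k ≥ K, v k = 0) (n : ℕ) : ∀ k ≥ K + n, (forwardShift w)^[n] v k = 0 := by
  intro k hk
  obtain ⟨k, rfl⟩ := Nat.exists_eq_add_of_le' (le_trans (Nat.le_add_left n K) hk)
  rw [forwardShift_iterate_apply_add hw, hv k (by omega), zero_div]

end Shift

section BlockSum

variable {𝕜 : Type*} [NormedField 𝕜] {w : 𝕜}

theorem norm_forwardShift_iterate_le (hw : 1 ≤ ‖w‖) {v : ℕ → 𝕜} {R : ℝ} (hR : ∀ k, ‖v k‖ ≤ R)
    (n k : ℕ) : ‖(forwardShift w)^[n] v k‖ ≤ R / ‖w‖ ^ n.choose 2 := by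
  have hw0 : w ≠ 0 := norm_pos_iff.1 (by linarith)
  rcases lt_or_ge k n with hk | hk
  · rw [forwardShift_iterate_apply_of_lt hk, norm_zero]
    exact div_nonneg ((norm_nonneg _).trans (hR 0)) (by positivity)
  · obtain ⟨k, rfl⟩ := Nat.exists_eq_add_of_le' hk
    rw [forwardShift_iterate_apply_add hw0, norm_div, norm_pow]
    exact div_le_div₀ ((norm_nonneg _).trans (hR 0)) (hR k) (by positivity)
      (pow_le_pow_right₀ hw (Nat.le_add_left _ _))

noncomputable def blockSum (w : 𝕜) (n : ℕ → ℕ) (t : ℕ → ℕ → 𝕜) : ℕ → 𝕜 :=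
  fun p => ∑' j, (forwardShift w)^[n j] (t j) p

theorem backShift_iterate_blockSum_apply (n : ℕ → ℕ) (t : ℕ → ℕ → 𝕜) (m k : ℕ) :
    (backShift w)^[m] (blockSum w n t) k =
      ∑' j, (backShift w)^[m] ((forwardShift w)^[n j] (t j)) k := by
  simp only [backShift_iterate_apply, blockSum, tsum_mul_left]

theorem summable_backShift_iterate_forwardShift_iterate {n : ℕ → ℕ} (hn : StrictMono n)
    (t : ℕ → ℕ → 𝕜) (m k : ℕ) :
    Summable fun j => (backShift w)^[m] ((forwardShift w)^[n j] (t j)) k := by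
  refine summable_of_ne_finset_zero (s := Finset.range (k + m + 1)) fun j hj => ?_
  rw [backShift_iterate_apply, forwardShift_iterate_apply_of_lt, mul_zero]
  simp only [Finset.mem_range, not_lt] at hj
  exact lt_of_lt_of_le hj (hn.id_le j)

theorem backShift_iterate_blockSum_periodic (hw : w ≠ 0) {N : ℕ} (hN : 0 < N) {t : ℕ → 𝕜}
    (ht : ∀ k ≥ N, t k = 0) :
    (backShift w)^[N] (blockSum w (· * N) fun _ => t) = blockSum w (· * N) fun _ => t := by
  refine funext fun k => ?_
  have hsum := summable_backShift_iterate_forwardShift_iterate (w := w)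
    (strictMono_mul_right_of_pos hN) (fun _ => t) N k
  rw [backShift_iterate_blockSum_apply, hsum.tsum_eq_zero_add, zero_mul, Function.iterate_zero_apply, backShift_iterate_apply_eq_zero ht
    (Nat.le_add_left N k), zero_add]
  refine tsum_congr fun j => ?_
  rw [backShift_iterate_forwardShift_iterate hw (Nat.le_mul_of_pos_left N j.succ_pos),
    Nat.succ_mul, Nat.add_sub_cancel]

end BlockSum

section BlockEstimates

variable {𝕜 : Type*} [NormedField 𝕜] {w : 𝕜} {n : ℕ → ℕ} {t : ℕ → ℕ → 𝕜} {K : ℕ → ℕ}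
  {R δ : ℕ → ℝ}

theorem norm_backShift_iterate_forwardShift_iterate_le (hw : 1 < ‖w‖) (hn : Monotone n)
    (hR : ∀ j k, ‖t j k‖ ≤ R j)
    (hsmall : ∀ i j, i < j → R j ≤ δ i * (1 / 2) ^ (j - i) * ‖w‖ ^ (n j - n i).choose 2)
    {i j m : ℕ} (hij : i < j) (hm : m ≤ n i) (k : ℕ) :
    ‖(backShift w)^[m] ((forwardShift w)^[n j] (t j)) k‖ ≤ δ i * (1 / 2) ^ (j - i) := by
  have hw0 : w ≠ 0 := norm_pos_iff.1 (by linarith)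
  rw [backShift_iterate_forwardShift_iterate hw0 (hm.trans (hn hij.le))]
  refine (norm_forwardShift_iterate_le hw.le (hR j) _ k).trans ?_
  rw [div_le_iff₀ (by positivity)]
  refine (hsmall i j hij).trans (mul_le_mul_of_nonneg_left ?_ ?_)
  · exact pow_le_pow_right₀ hw.le (Nat.choose_le_choose 2 (by omega))
  · exact (mul_nonneg_iff_of_pos_right (by positivity)).1
      (((norm_nonneg _).trans (hR j 0)).trans (hsmall i j hij))

theorem tendsto_backShift_iterate_blockSum [CompleteSpace 𝕜] (hw : 1 < ‖w‖) (hn : StrictMono n)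
    (hsupp : ∀ j, ∀ k ≥ K j, t j k = 0) (hgap : ∀ j, n j + K j ≤ n (j + 1))
    (hR : ∀ j k, ‖t j k‖ ≤ R j)
    (hsmall : ∀ i j, i < j → R j ≤ δ i * (1 / 2) ^ (j - i) * ‖w‖ ^ (n j - n i).choose 2)
    (m : ℕ) : Tendsto ((backShift w)^[m] (blockSum w n t)) atTop (𝓝 0) := by
  have hw0 : w ≠ 0 := norm_pos_iff.1 (by linarith)
  have hvanish : ∀ j k, n j + K j ≤ k + m →
      (backShift w)^[m] ((forwardShift w)^[n j] (t j)) k = 0 := fun j k hk =>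
    backShift_iterate_apply_eq_zero
      (forwardShift_iterate_apply_eq_zero hw0 (hsupp j) (n j)) (by omega)
  have hlim := tendsto_tsum_of_dominated_convergence (𝓕 := atTop)
    (f := fun k j => (backShift w)^[m] ((forwardShift w)^[n j] (t j)) k) (g := 0)
    (hasSum_ite_geometric (δ m) m).summable
    (fun j => tendsto_atTop_of_eventually_const (i₀ := n j + K j) fun k hk =>
      hvanish j k (by omega))
    (eventually_atTop.2 ⟨n m + K m, fun k hk j => ?_⟩)
  · simpa [funext (backShift_iterate_blockSum_apply n t m)] using hlim
  split_ifs with hj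
  · exact norm_backShift_iterate_forwardShift_iterate_le hw hn.monotone hR hsmall hj
      (hn.id_le m) k
  · have hjm : n j + K j ≤ n m + K m := by
      rcases (not_lt.1 hj).lt_or_eq with hj | rfl
      · exact (hgap j).trans ((hn.monotone hj).trans (Nat.le_add_right _ _))
      · exact le_rfl
    rw [hvanish j k (by omega), norm_zero]

theorem norm_backShift_iterate_blockSum_sub_le (hw : 1 < ‖w‖) (hn : StrictMono n)
    (hsupp : ∀ j, ∀ k ≥ K j, t j k = 0) (hgap : ∀ j, n j + K j ≤ n (j + 1))
    (hR : ∀ j k, ‖t j k‖ ≤ R j)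
    (hsmall : ∀ i j, i < j → R j ≤ δ i * (1 / 2) ^ (j - i) * ‖w‖ ^ (n j - n i).choose 2)
    (s k : ℕ) : ‖(backShift w)^[n s] (blockSum w n t) k - t s k‖ ≤ δ s := by
  classical
  have hw0 : w ≠ 0 := norm_pos_iff.1 (by linarith)
  rw [backShift_iterate_blockSum_apply,
    (summable_backShift_iterate_forwardShift_iterate hn t (n s) k).tsum_eq_add_tsum_ite s,
    backShift_iterate_forwardShift_iterate hw0 le_rfl, Nat.sub_self, Function.iterate_zero_apply,
    add_sub_cancel_left]
  refine tsum_of_norm_bounded (hasSum_ite_geometric (δ s) s) fun j => ?_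
  rcases lt_trichotomy j s with hj | rfl | hj
  · have hjs : n j + K j ≤ n s := (hgap j).trans (hn.monotone hj)
    rw [if_neg hj.ne, if_neg (by omega), backShift_iterate_apply_eq_zero
      (forwardShift_iterate_apply_eq_zero hw0 (hsupp j) (n j)) (by omega), norm_zero]
  · simp
  · rw [if_neg hj.ne', if_pos hj]
    exact norm_backShift_iterate_forwardShift_iterate_le hw hn.monotone hR hsmall hj le_rfl k

end BlockEstimates

section ShiftDynamics

variable {𝕜 : Type*} [NormedField 𝕜] {w : 𝕜}

theorem exists_forall_norm_le_of_eq_zero {v : ℕ → 𝕜} {K : ℕ} (hv : ∀ k ≥ K, v k = 0) :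
    ∃ R, ∀ k, ‖v k‖ ≤ R := by
  obtain ⟨R, hR⟩ := isBounded_iff_forall_norm_le.1
    (Metric.isBounded_range_of_tendsto v (tendsto_atTop_of_eventually_const hv))
  exact ⟨R, fun k => hR _ ⟨k, rfl⟩⟩

theorem exists_forall_ge_norm_le {z : ℕ → 𝕜} (hz : Tendsto z atTop (𝓝 0)) {ε : ℝ} (hε : 0 < ε) :
    ∃ K, ∀ k ≥ K, ‖z k‖ ≤ ε :=
  eventually_atTop.1 (hz.norm.eventually (ge_mem_nhds (by rwa [norm_zero])))

variable [CompleteSpace 𝕜]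

theorem exists_backShift_periodic_near (hw : 1 < ‖w‖) {z : ℕ → 𝕜} (hz : Tendsto z atTop (𝓝 0))
    {ε : ℝ} (hε : 0 < ε) :
    ∃ v : ℕ → 𝕜, (∀ m, Tendsto ((backShift w)^[m] v) atTop (𝓝 0)) ∧
      (∃ N, 1 ≤ N ∧ (backShift w)^[N] v = v) ∧ ∀ k, ‖v k - z k‖ ≤ ε := by
  have hw0 : w ≠ 0 := norm_pos_iff.1 (by linarith)
  obtain ⟨K, hK⟩ := exists_forall_ge_norm_le hz (half_pos hε)
  set t : ℕ → 𝕜 := fun k => if k < K then z k else 0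
  have ht : ∀ k ≥ K, t k = 0 := fun k hk => if_neg (not_lt.2 hk)
  obtain ⟨R, hR⟩ := exists_forall_norm_le_of_eq_zero ht
  obtain ⟨N, hNK, hN2, hNR⟩ : ∃ N, K + 1 ≤ N ∧ 2 ≤ ‖w‖ ^ N.choose 2 ∧
      2 * R ≤ ε / 2 * ‖w‖ ^ N.choose 2 :=
    ((eventually_ge_atTop _).and (((tendsto_pow_choose_two_atTop hw).eventually_ge_atTop _).and
      (((tendsto_pow_choose_two_atTop hw).const_mul_atTop (half_pos hε)).eventually_ge_atTop
        _))).exists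
  have hN : 0 < N := by omega
  have htN : ∀ k ≥ N, t k = 0 := fun k hk => ht k (by omega)
  -- blocks `i < j` are `(j - i) N` apart, and `d * C(N, 2) ≤ C(d N, 2)`
  have hsmall : ∀ i j, i < j →
      R ≤ ε / 2 * (1 / 2) ^ (j - i) * ‖w‖ ^ (j * N - i * N).choose 2 := by
    intro i j hij
    set X := ‖w‖ ^ N.choose 2
    calc R ≤ ε / 2 * (X / 2) := by linarith
      _ ≤ ε / 2 * (X / 2) ^ (j - i) := by
        gcongr
        exact le_self_pow₀ (by linarith) (by omega)
      _ = ε / 2 * (1 / 2) ^ (j - i) * ‖w‖ ^ (N.choose 2 * (j - i)) := by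
        rw [pow_mul, div_pow, one_div_pow]
        ring
      _ ≤ ε / 2 * (1 / 2) ^ (j - i) * ‖w‖ ^ (j * N - i * N).choose 2 := by
        gcongr
        · exact hw.le
        · rw [← Nat.sub_mul, mul_comm]
          exact Nat.mul_choose_two_le _ _
  have hmono : StrictMono (· * N) := strictMono_mul_right_of_pos hN
  have hgap : ∀ j, j * N + N ≤ (j + 1) * N := fun j => (Nat.succ_mul j N).ge
  refine ⟨blockSum w (· * N) fun _ => t,
    tendsto_backShift_iterate_blockSum hw hmono (fun _ => htN) hgap (fun _ => hR) hsmall,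
    ⟨N, hN, backShift_iterate_blockSum_periodic hw0 hN htN⟩, fun k => ?_⟩
  have hv := norm_backShift_iterate_blockSum_sub_le hw hmono (fun _ => htN) hgap (fun _ => hR)
    hsmall 0 k
  have htz : ‖t k - z k‖ ≤ ε / 2 := by
    rcases lt_or_ge k K with hk | hk
    · rw [show t k = z k from if_pos hk, sub_self, norm_zero]
      exact (half_pos hε).le
    · rw [ht k hk, zero_sub, norm_neg]; exact hK k hk
  calc _ ≤ _ := norm_sub_le_norm_sub_add_norm_sub _ (t k) _
    _ ≤ ε / 2 + ε / 2 := add_le_add (by simpa using hv) htz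
    _ = ε := add_halves ε

end ShiftDynamics

section Hypercyclic

variable (𝕜 : Type*) [NormedField 𝕜] [TopologicalSpace.SeparableSpace 𝕜]

noncomputable def denseFiniteSeq (i : ℕ) : ℕ → 𝕜 :=
  fun k => ((Denumerable.ofNat (List ℕ) i).map (TopologicalSpace.denseSeq 𝕜)).getD k 0

variable {𝕜}

theorem denseFiniteSeq_eq_zero (i : ℕ) :
    ∀ k ≥ (Denumerable.ofNat (List ℕ) i).length, denseFiniteSeq 𝕜 i k = 0 := fun k hk =>
  List.getD_eq_default _ _ (by rwa [List.length_map])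

theorem exists_denseFiniteSeq_near {z : ℕ → 𝕜} (hz : Tendsto z atTop (𝓝 0)) {ε : ℝ}
    (hε : 0 < ε) : ∃ i, ∀ k, ‖denseFiniteSeq 𝕜 i k - z k‖ ≤ ε := by
  obtain ⟨K, hK⟩ := exists_forall_ge_norm_le hz hε
  choose g hg using fun k => (TopologicalSpace.denseRange_denseSeq 𝕜).exists_dist_lt (z k) hε
  refine ⟨Encodable.encode ((List.range K).map g), fun k => ?_⟩
  rcases lt_or_ge k K with hk | hk
  · have hk' : denseFiniteSeq 𝕜 (Encodable.encode ((List.range K).map g)) k =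
        TopologicalSpace.denseSeq 𝕜 (g k) := by
      simp [denseFiniteSeq, hk]
    rw [hk', ← dist_eq_norm, dist_comm]
    exact (hg k).le
  · rw [denseFiniteSeq_eq_zero _ k (by simpa using hk), zero_sub, norm_neg]
    exact hK k hk

variable [CompleteSpace 𝕜] {w : 𝕜}

theorem exists_backShift_hypercyclic (hw : 1 < ‖w‖) :
    ∃ v : ℕ → 𝕜, (∀ m, Tendsto ((backShift w)^[m] v) atTop (𝓝 0)) ∧
      ∀ z : ℕ → 𝕜, Tendsto z atTop (𝓝 0) → ∀ ε > 0, ∃ n, ∀ k,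
        ‖(backShift w)^[n] v k - z k‖ ≤ ε := by
  set t : ℕ → ℕ → 𝕜 := fun j => denseFiniteSeq 𝕜 j.unpair.1
  set K : ℕ → ℕ := fun j => (Denumerable.ofNat (List ℕ) j.unpair.1).length
  have hsupp : ∀ j, ∀ k ≥ K j, t j k = 0 := fun j => denseFiniteSeq_eq_zero _
  choose R hR using fun j => exists_forall_norm_le_of_eq_zero (hsupp j)
  -- target `i` recurs at every stage `Nat.pair i p`, where the tolerance is at most `1 / (p + 1)`
  set δ : ℕ → ℝ := fun j => 1 / (j + 1)
  have hδ : Antitone δ := fun i j hij =>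
    one_div_le_one_div_of_le (by positivity) (by exact_mod_cast Nat.succ_le_succ hij)
  choose g hgK hgR using fun j =>
    ((eventually_ge_atTop (K j + 1)).and
      (((tendsto_pow_choose_two_atTop hw).const_mul_atTop (by positivity :
        0 < δ j * (1 / 2) ^ (j + 1))).eventually_ge_atTop (R (j + 1)))).exists
  set n : ℕ → ℕ := fun j => ∑ i ∈ Finset.range j, g i
  have hn_succ : ∀ j, n (j + 1) = n j + g j := fun j => Finset.sum_range_succ _ _
  have hgap : ∀ j, n j + K j ≤ n (j + 1) := fun j => by rw [hn_succ]; linarith [hgK j]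
  have hn : StrictMono n := strictMono_nat_of_lt_succ fun j => by rw [hn_succ]; linarith [hgK j]
  have hsmall : ∀ i j, i < j → R j ≤ δ i * (1 / 2) ^ (j - i) * ‖w‖ ^ (n j - n i).choose 2 := by
    intro i j hij
    obtain ⟨j, rfl⟩ := Nat.exists_eq_add_of_lt hij
    refine (hgR (i + j)).trans ?_
    have hni : n i ≤ n (i + j) := hn.monotone (Nat.le_add_right i j)
    have hg : g (i + j) ≤ n (i + j + 1) - n i := by rw [hn_succ]; omega
    gcongr ?_ * ?_ * ?_
    · exact hδ (Nat.le_add_right i j)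
    · exact pow_le_pow_of_le_one (by norm_num) (by norm_num) (by omega)
    · exact pow_le_pow_right₀ hw.le (Nat.choose_le_choose 2 hg)
  refine ⟨blockSum w n t, tendsto_backShift_iterate_blockSum hw hn hsupp hgap hR hsmall,
    fun z hz ε hε => ?_⟩
  obtain ⟨i, hi⟩ := exists_denseFiniteSeq_near hz (half_pos hε)
  obtain ⟨p, hp⟩ := exists_nat_one_div_lt (half_pos hε)
  refine ⟨n (Nat.pair i p), fun k => ?_⟩
  have ht : t (Nat.pair i p) = denseFiniteSeq 𝕜 i := by simp only [t, Nat.unpair_pair]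
  have hδp : δ (Nat.pair i p) ≤ ε / 2 := (hδ (Nat.right_le_pair i p)).trans hp.le
  calc _ ≤ _ := norm_sub_le_norm_sub_add_norm_sub _ (t (Nat.pair i p) k) _
    _ ≤ ε / 2 + ε / 2 := add_le_add
      ((norm_backShift_iterate_blockSum_sub_le hw hn hsupp hgap hR hsmall _ k).trans hδp)
      (ht ▸ hi k)
    _ = ε := add_halves ε

end Hypercyclic

section Eigen

variable {𝕜 : Type*} [Field 𝕜] {w : 𝕜}

theorem backShift_smul (c : 𝕜) (v : ℕ → 𝕜) : backShift w (c • v) = c • backShift w v :=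
  funext fun _ => mul_left_comm _ _ _

def eigenSeq (w μ : 𝕜) : ℕ → 𝕜 := fun k => μ ^ k / w ^ k.choose 2

theorem backShift_eigenSeq (hw : w ≠ 0) (μ : 𝕜) :
    backShift w (eigenSeq w μ) = μ • eigenSeq w μ := by
  funext k
  simp only [backShift, eigenSeq, Pi.smul_apply, smul_eq_mul, Nat.choose_succ_succ',
    Nat.choose_one_right, pow_succ, pow_add]
  field_simp

theorem eq_smul_eigenSeq_of_backShift_eq (hw : w ≠ 0) {μ : 𝕜} {v : ℕ → 𝕜}
    (hv : backShift w v = μ • v) : v = v 0 • eigenSeq w μ := by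
  funext k
  induction k with
  | zero => simp [eigenSeq]
  | succ k ih =>
    have hk := congrFun hv k
    simp only [backShift, Pi.smul_apply, smul_eq_mul] at hk ih ⊢
    have hrec : v (k + 1) = μ * v k / w ^ k := by
      rw [eq_div_iff (pow_ne_zero _ hw), mul_comm]
      exact hk
    rw [hrec, ih]
    simp only [eigenSeq, Nat.choose_succ_succ', Nat.choose_one_right, pow_succ, pow_add]
    field_simp

theorem tendsto_eigenSeq {𝕜 : Type*} [NormedField 𝕜] [CompleteSpace 𝕜] {w : 𝕜} (hw : 1 < ‖w‖)
    (μ : 𝕜) : Tendsto (eigenSeq w μ) atTop (𝓝 0) := by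
  refine (summable_of_ratio_norm_eventually_le (r := 1 / 2) (by norm_num) ?_).tendsto_atTop_zero
  filter_upwards [(tendsto_pow_atTop_atTop_of_one_lt hw).eventually_ge_atTop (2 * ‖μ‖)] with k hk
  have hpos : 0 < ‖w‖ ^ k := by positivity
  have : ‖eigenSeq w μ (k + 1)‖ = ‖μ‖ / ‖w‖ ^ k * ‖eigenSeq w μ k‖ := by
    simp only [eigenSeq, Nat.choose_succ_succ', Nat.choose_one_right, pow_succ, pow_add, norm_div,
      norm_mul, norm_pow]
    field_simp
  rw [this]
  refine mul_le_mul_of_nonneg_right ?_ (norm_nonneg _)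
  rw [div_le_iff₀ hpos]
  linarith

end Eigen

section Conjugation

variable {𝕜 : Type*} [RCLike 𝕜] {w : 𝕜} {l : (ℕ → 𝕜) → 𝕜}

def toNull (l : (ℕ → 𝕜) → 𝕜) (x : ℕ → 𝕜) : ℕ → 𝕜
  | 0 => l x
  | k + 1 => x k - l x

def ofNull (v : ℕ → 𝕜) : ℕ → 𝕜 := fun k => v (k + 1) + v 0

theorem ofNull_toNull (l : (ℕ → 𝕜) → 𝕜) (x : ℕ → 𝕜) : ofNull (toNull l x) = x :=
  funext fun k => sub_add_cancel (x k) (l x)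

theorem ofNull_smul (c : 𝕜) (v : ℕ → 𝕜) : ofNull (c • v) = c • ofNull v :=
  funext fun _ => (mul_add c _ _).symm

theorem hatAct_eq_ofNull_backShift (w : 𝕜) (l : (ℕ → 𝕜) → 𝕜) (x : ℕ → 𝕜) :
    hatAct w l x = ofNull (backShift w (toNull l x)) :=
  funext fun k => by simp [hatAct, ofNull, backShift, toNull]

theorem tendsto_ofNull {v : ℕ → 𝕜} (hv : Tendsto v atTop (𝓝 0)) :
    Tendsto (ofNull v) atTop (𝓝 (v 0)) := by
  have h := ((tendsto_add_atTop_iff_nat 1).2 hv).add_const (v 0)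
  rwa [zero_add] at h

theorem ofNull_mem_cSet {v : ℕ → 𝕜} (hv : Tendsto v atTop (𝓝 0)) : ofNull v ∈ cSet 𝕜 :=
  ⟨v 0, tendsto_ofNull hv⟩

theorem toNull_ofNull (hl : ∀ x ∈ cSet 𝕜, Tendsto x atTop (𝓝 (l x))) {v : ℕ → 𝕜}
    (hv : Tendsto v atTop (𝓝 0)) : toNull l (ofNull v) = v := by
  have hlim : l (ofNull v) = v 0 :=
    tendsto_nhds_unique (hl _ (ofNull_mem_cSet hv)) (tendsto_ofNull hv)
  funext k
  cases k with
  | zero => exact hlim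
  | succ k => simp [toNull, ofNull, hlim]

theorem mem_cSet_iff_tendsto_toNull (hl : ∀ x ∈ cSet 𝕜, Tendsto x atTop (𝓝 (l x)))
    {x : ℕ → 𝕜} : x ∈ cSet 𝕜 ↔ Tendsto (toNull l x) atTop (𝓝 0) := by
  rw [← tendsto_add_atTop_iff_nat 1]
  refine ⟨fun hx => ?_, fun hx => ⟨l x, ?_⟩⟩
  · simpa [toNull] using (hl x hx).sub_const (l x)
  · simpa [toNull] using hx.add_const (l x)

theorem mem_hatDom_iff (hl : ∀ x ∈ cSet 𝕜, Tendsto x atTop (𝓝 (l x))) {x : ℕ → 𝕜} :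
    x ∈ hatDom w l ↔
      Tendsto (toNull l x) atTop (𝓝 0) ∧ Tendsto (backShift w (toNull l x)) atTop (𝓝 0) := by
  rw [hatDom, Set.mem_ofPred_eq, mem_cSet_iff_tendsto_toNull hl,
    ← tendsto_add_atTop_iff_nat 1 (f := backShift w (toNull l x))]
  rfl

theorem ofNull_mem_hatDom (hl : ∀ x ∈ cSet 𝕜, Tendsto x atTop (𝓝 (l x))) {v : ℕ → 𝕜}
    (hv : Tendsto v atTop (𝓝 0)) (hBv : Tendsto (backShift w v) atTop (𝓝 0)) :
    ofNull v ∈ hatDom w l := by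
  rw [mem_hatDom_iff hl, toNull_ofNull hl hv]
  exact ⟨hv, hBv⟩

theorem hatAct_ofNull (hl : ∀ x ∈ cSet 𝕜, Tendsto x atTop (𝓝 (l x))) {v : ℕ → 𝕜}
    (hv : Tendsto v atTop (𝓝 0)) : hatAct w l (ofNull v) = ofNull (backShift w v) := by
  rw [hatAct_eq_ofNull_backShift, toNull_ofNull hl hv]

theorem toNull_hatAct (hl : ∀ x ∈ cSet 𝕜, Tendsto x atTop (𝓝 (l x))) {x : ℕ → 𝕜}
    (hx : x ∈ hatDom w l) : toNull l (hatAct w l x) = backShift w (toNull l x) := by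
  rw [hatAct_eq_ofNull_backShift, toNull_ofNull hl ((mem_hatDom_iff hl).1 hx).2]

theorem hatAct_iterate_ofNull (hl : ∀ x ∈ cSet 𝕜, Tendsto x atTop (𝓝 (l x))) {v : ℕ → 𝕜}
    (hv : ∀ m, Tendsto ((backShift w)^[m] v) atTop (𝓝 0)) (n : ℕ) :
    (hatAct w l)^[n] (ofNull v) = ofNull ((backShift w)^[n] v) := by
  induction n with
  | zero => rfl
  | succ n ih =>
    rw [Function.iterate_succ_apply', ih, hatAct_ofNull hl (hv n), Function.iterate_succ_apply']

theorem ofNull_mem_hatDomPow (hl : ∀ x ∈ cSet 𝕜, Tendsto x atTop (𝓝 (l x))) {v : ℕ → 𝕜}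
    (hv : ∀ m, Tendsto ((backShift w)^[m] v) atTop (𝓝 0)) (N : ℕ) :
    ofNull v ∈ hatDomPow w l N := fun m _ => by
  rw [hatAct_iterate_ofNull hl hv]
  refine ofNull_mem_hatDom hl (hv m) ?_
  simpa only [Function.iterate_succ_apply'] using hv (m + 1)

theorem supNorm_le {f : ℕ → 𝕜} {C : ℝ} (h : ∀ k, ‖f k‖ ≤ C) : supNorm f ≤ C :=
  ciSup_le h

theorem norm_le_supNorm {f : ℕ → 𝕜} (hf : f ∈ cSet 𝕜) (k : ℕ) : ‖f k‖ ≤ supNorm f := by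
  obtain ⟨L, hL⟩ := hf
  exact le_ciSup hL.norm.bddAbove_range k

theorem supNorm_ofNull_sub_le {a b : ℕ → 𝕜} {δ : ℝ} (h : ∀ k, ‖a k - b k‖ ≤ δ) :
    supNorm (ofNull a - ofNull b) ≤ 2 * δ := supNorm_le fun k =>
  calc ‖(ofNull a - ofNull b) k‖ = ‖(a (k + 1) - b (k + 1)) + (a 0 - b 0)‖ := by
        rw [Pi.sub_apply, ofNull, ofNull, add_sub_add_comm]
    _ ≤ 2 * δ := (norm_add_le _ _).trans (by linarith [h (k + 1), h 0])

theorem norm_toNull_sub_le (hl : ∀ x ∈ cSet 𝕜, Tendsto x atTop (𝓝 (l x))) {a b : ℕ → 𝕜}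
    (ha : a ∈ cSet 𝕜) (hb : b ∈ cSet 𝕜) (k : ℕ) :
    ‖toNull l a k - toNull l b k‖ ≤ 2 * supNorm (a - b) := by
  have hab : a - b ∈ cSet 𝕜 := ⟨l a - l b, (hl a ha).sub (hl b hb)⟩
  have hpt := norm_le_supNorm hab
  have hlim : ‖l a - l b‖ ≤ supNorm (a - b) :=
    le_of_tendsto ((hl a ha).sub (hl b hb)).norm (Eventually.of_forall hpt)
  cases k with
  | zero =>
    show ‖l a - l b‖ ≤ _
    linarith [(norm_nonneg _).trans hlim]
  | succ k =>
    calc ‖(a k - l a) - (b k - l b)‖ = ‖(a - b) k - (l a - l b)‖ := by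
          rw [Pi.sub_apply, sub_sub_sub_comm]
      _ ≤ 2 * supNorm (a - b) := (norm_sub_le _ _).trans (by linarith [hpt k])

theorem tendsto_toNull_apply (hl : ∀ x ∈ cSet 𝕜, Tendsto x atTop (𝓝 (l x))) {a : ℕ → ℕ → 𝕜}
    {b : ℕ → 𝕜} (ha : ∀ m, a m ∈ cSet 𝕜) (hb : b ∈ cSet 𝕜)
    (hab : Tendsto (fun m => supNorm (a m - b)) atTop (𝓝 0)) (k : ℕ) :
    Tendsto (fun m => toNull l (a m) k) atTop (𝓝 (toNull l b k)) :=
  tendsto_iff_norm_sub_tendsto_zero.2 <| squeeze_zero (fun _ => norm_nonneg _)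
    (fun m => norm_toNull_sub_le hl (ha m) hb k) (by simpa using hab.const_mul 2)

end Conjugation

section HatOperator

variable {𝕜 : Type*} [RCLike 𝕜] {w : 𝕜} {l : (ℕ → 𝕜) → 𝕜}

theorem hatAct_unbounded (hw : 1 < ‖w‖) (hl : ∀ x ∈ cSet 𝕜, Tendsto x atTop (𝓝 (l x))) :
    ¬ ∃ C : ℝ, ∀ x ∈ hatDom w l, supNorm (hatAct w l x) ≤ C * supNorm x := by
  rintro ⟨C, hC⟩
  obtain ⟨n, hn⟩ := pow_unbounded_of_one_lt (max C 0) hw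
  obtain ⟨v, hv1, hv0⟩ : ∃ v : ℕ → 𝕜, v (n + 2) = 1 ∧ ∀ k ≠ n + 2, v k = 0 :=
    ⟨Pi.single (n + 2) 1, Pi.single_eq_same _ _, fun k hk => Pi.single_eq_of_ne hk _⟩
  have hv : Tendsto v atTop (𝓝 0) :=
    tendsto_atTop_of_eventually_const (i₀ := n + 3) fun k hk => hv0 k (by omega)
  have hBv : Tendsto (backShift w v) atTop (𝓝 0) :=
    tendsto_atTop_of_eventually_const (i₀ := n + 2) fun k hk => by
      rw [backShift, hv0 _ (by omega), mul_zero]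
  have hsup : supNorm (ofNull v) ≤ 1 := supNorm_le fun k => by
    rw [ofNull, hv0 0 (by omega), add_zero]
    by_cases hk : k + 1 = n + 2
    · rw [hk, hv1, norm_one]
    · rw [hv0 _ hk, norm_zero]
      exact zero_le_one
  have hsup0 : 0 ≤ supNorm (ofNull v) :=
    (norm_nonneg _).trans (norm_le_supNorm (ofNull_mem_cSet hv) 0)
  have hAv : ‖w‖ ^ (n + 1) ≤ supNorm (hatAct w l (ofNull v)) := by
    rw [hatAct_ofNull hl hv]
    refine le_of_eq_of_le ?_ (norm_le_supNorm (ofNull_mem_cSet hBv) n)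
    rw [ofNull, backShift, backShift, hv1, hv0 1 (by omega), mul_zero, add_zero, mul_one, norm_pow]
  have hCv : C * supNorm (ofNull v) ≤ max C 0 := by
    rcases le_total 0 C with hC0 | hC0
    · nlinarith [le_max_left C 0]
    · nlinarith [le_max_right C 0]
  have hbound := hC _ (ofNull_mem_hatDom hl hv hBv)
  have hpow : ‖w‖ ^ n ≤ ‖w‖ ^ (n + 1) := pow_le_pow_right₀ hw.le (Nat.le_succ n)
  linarith

theorem hatAct_closed (hl : ∀ x ∈ cSet 𝕜, Tendsto x atTop (𝓝 (l x))) :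
    ∀ (X : ℕ → ℕ → 𝕜) (x y : ℕ → 𝕜),
      (∀ m, X m ∈ hatDom w l) → x ∈ cSet 𝕜 → y ∈ cSet 𝕜 →
      Tendsto (fun m => supNorm (X m - x)) atTop (𝓝 0) →
      Tendsto (fun m => supNorm (hatAct w l (X m) - y)) atTop (𝓝 0) →
      x ∈ hatDom w l ∧ hatAct w l x = y := by
  intro X x y hX hx hy hXx hAXy
  have hAX : ∀ m, hatAct w l (X m) ∈ cSet 𝕜 := fun m => by
    rw [hatAct_eq_ofNull_backShift]
    exact ofNull_mem_cSet ((mem_hatDom_iff hl).1 (hX m)).2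
  have hshift : backShift w (toNull l x) = toNull l y := funext fun k => by
    refine tendsto_nhds_unique ?_ (tendsto_toNull_apply hl hAX hy hAXy k)
    simp only [toNull_hatAct hl (hX _)]
    exact (tendsto_toNull_apply hl (fun m => (hX m).1) hx hXx (k + 1)).const_mul (w ^ k)
  have hy0 := (mem_cSet_iff_tendsto_toNull hl).1 hy
  refine ⟨(mem_hatDom_iff hl).2 ⟨(mem_cSet_iff_tendsto_toNull hl).1 hx, hshift ▸ hy0⟩, ?_⟩
  rw [hatAct_eq_ofNull_backShift, hshift, ofNull_toNull]

theorem exists_hatAct_hypercyclic (hw : 1 < ‖w‖) (hl : ∀ x ∈ cSet 𝕜, Tendsto x atTop (𝓝 (l x))) :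
    ∃ x : ℕ → 𝕜, (∀ n : ℕ, 1 ≤ n → x ∈ hatDomPow w l n) ∧
      ∀ y ∈ cSet 𝕜, ∀ ε > (0 : ℝ), ∃ n : ℕ, supNorm ((hatAct w l)^[n] x - y) < ε := by
  obtain ⟨v, hv, hdense⟩ := exists_backShift_hypercyclic hw
  refine ⟨ofNull v, fun n _ => ofNull_mem_hatDomPow hl hv n, fun y hy ε hε => ?_⟩
  obtain ⟨n, hn⟩ := hdense _ ((mem_cSet_iff_tendsto_toNull hl).1 hy) (ε / 3) (by positivity)
  refine ⟨n, ?_⟩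
  rw [hatAct_iterate_ofNull hl hv, ← ofNull_toNull l y]
  linarith [supNorm_ofNull_sub_le hn]

theorem dense_hatAct_periodicPts (hw : 1 < ‖w‖) (hl : ∀ x ∈ cSet 𝕜, Tendsto x atTop (𝓝 (l x))) :
    ∀ y ∈ cSet 𝕜, ∀ ε > (0 : ℝ), ∃ x : ℕ → 𝕜,
      (∃ N : ℕ, 1 ≤ N ∧ x ∈ hatDomPow w l N ∧ (hatAct w l)^[N] x = x) ∧
      supNorm (x - y) < ε := by
  intro y hy ε hε
  obtain ⟨v, hv, ⟨N, hN, hper⟩, hvy⟩ := exists_backShift_periodic_near hw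
    ((mem_cSet_iff_tendsto_toNull hl).1 hy) (by positivity : 0 < ε / 3)
  refine ⟨ofNull v, ⟨N, hN, ofNull_mem_hatDomPow hl hv N, ?_⟩, ?_⟩
  · rw [hatAct_iterate_ofNull hl hv, hper]
  · rw [← ofNull_toNull l y]
    linarith [supNorm_ofNull_sub_le hvy]

theorem exists_hatAct_eigenspace_eq_range_smul (hw : 1 < ‖w‖)
    (hl : ∀ x ∈ cSet 𝕜, Tendsto x atTop (𝓝 (l x))) (μ : 𝕜) :
    ∃ v : ℕ → 𝕜, v ∈ hatDom w l ∧ v ≠ 0 ∧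
      {x : ℕ → 𝕜 | x ∈ hatDom w l ∧ hatAct w l x = μ • x} = Set.range fun c : 𝕜 => c • v := by
  have hw0 : w ≠ 0 := norm_pos_iff.1 (by linarith)
  set e := eigenSeq w μ
  have he : Tendsto e atTop (𝓝 0) := tendsto_eigenSeq hw μ
  have hsmul : ∀ c : 𝕜, Tendsto (c • e) atTop (𝓝 0) := fun c =>
    smul_zero (A := 𝕜) c ▸ he.const_smul c
  have hBsmul : ∀ c : 𝕜, backShift w (c • e) = (μ * c) • e := fun c => by
    rw [backShift_smul, backShift_eigenSeq hw0, smul_smul, mul_comm]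
  have hmem : ∀ c : 𝕜, ofNull (c • e) ∈ hatDom w l := fun c =>
    ofNull_mem_hatDom hl (hsmul c) (hBsmul c ▸ hsmul (μ * c))
  refine ⟨ofNull e, one_smul 𝕜 e ▸ hmem 1, fun h0 => ?_, ?_⟩
  · have h := tendsto_ofNull he
    rw [h0] at h
    have h1 : (0 : 𝕜) = e 0 := tendsto_nhds_unique tendsto_const_nhds h
    simp [e, eigenSeq] at h1
  ext x
  constructor
  · rintro ⟨hx, hAx⟩
    obtain ⟨hv, hBv⟩ := (mem_hatDom_iff hl).1 hx
    have hshift : backShift w (toNull l x) = μ • toNull l x :=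
      calc backShift w (toNull l x) = toNull l (ofNull (backShift w (toNull l x))) :=
            (toNull_ofNull hl hBv).symm
        _ = toNull l (ofNull (μ • toNull l x)) := by
            rw [← hatAct_eq_ofNull_backShift, hAx, ofNull_smul, ofNull_toNull]
        _ = μ • toNull l x := toNull_ofNull hl (smul_zero (A := 𝕜) μ ▸ hv.const_smul μ)
    refine ⟨toNull l x 0, ?_⟩
    show toNull l x 0 • ofNull e = x
    rw [← ofNull_smul, ← eq_smul_eigenSeq_of_backShift_eq hw0 hshift, ofNull_toNull]
  · rintro ⟨c, rfl⟩
    show c • ofNull e ∈ hatDom w l ∧ hatAct w l (c • ofNull e) = μ • c • ofNull e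
    rw [← ofNull_smul, hatAct_ofNull hl (hsmul c), hBsmul, ← ofNull_smul, smul_smul]
    exact ⟨hmem c, rfl⟩

end HatOperator

/-- For every `w` with `‖w‖ > 1`, the linear operator `Â_w` in `c` defined by
`(Â_w x)_k = w^k (x_{k+1} - l(x)) + x_1 - l(x)` on
`D(Â_w) = {x ∈ c : (w^k (x_{k+1} - l(x)))_k ∈ c₀}` is unbounded, closed, and chaotic (it has
a hypercyclic vector in `⋂_{n ≥ 1} D(Â_wⁿ)` and a dense set of periodic points, density taken
w.r.t. the sup-norm); moreover, every `λ` is an eigenvalue of `Â_w` of geometric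
multiplicity `1`, i.e. the eigenspace `ker (Â_w - λI)` is spanned by a single nonzero
vector. -/
theorem unbounded_operator_in_c_chaotic
    (𝕜 : Type*) [RCLike 𝕜] (w : 𝕜) (hw : 1 < ‖w‖)
    (l : (ℕ → 𝕜) → 𝕜)
    (hl : ∀ x ∈ cSet 𝕜, Tendsto x atTop (nhds (l x))) :
    -- `Â_w` is unbounded
    (¬ ∃ C : ℝ, ∀ x ∈ hatDom w l, supNorm (hatAct w l x) ≤ C * supNorm x) ∧
    -- `Â_w` is closed
    (∀ (X : ℕ → ℕ → 𝕜) (x y : ℕ → 𝕜),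
      (∀ m, X m ∈ hatDom w l) → x ∈ cSet 𝕜 → y ∈ cSet 𝕜 →
      Tendsto (fun m => supNorm (X m - x)) atTop (nhds 0) →
      Tendsto (fun m => supNorm (hatAct w l (X m) - y)) atTop (nhds 0) →
      x ∈ hatDom w l ∧ hatAct w l x = y) ∧
    -- `Â_w` has a hypercyclic vector in `C^∞(Â_w)`
    (∃ x : ℕ → 𝕜, (∀ n : ℕ, 1 ≤ n → x ∈ hatDomPow w l n) ∧
      ∀ y ∈ cSet 𝕜, ∀ ε > (0 : ℝ), ∃ n : ℕ, supNorm ((hatAct w l)^[n] x - y) < ε) ∧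
    -- the periodic points of `Â_w` are dense in `c`
    (∀ y ∈ cSet 𝕜, ∀ ε > (0 : ℝ),
      ∃ x : ℕ → 𝕜,
        (∃ N : ℕ, 1 ≤ N ∧ x ∈ hatDomPow w l N ∧ (hatAct w l)^[N] x = x) ∧
        supNorm (x - y) < ε) ∧
    -- every `λ` is an eigenvalue of geometric multiplicity `1`
    (∀ lam : 𝕜, ∃ v : ℕ → 𝕜, v ∈ hatDom w l ∧ v ≠ 0 ∧
      {x : ℕ → 𝕜 | x ∈ hatDom w l ∧ hatAct w l x = lam • x} =
        Set.range fun c : 𝕜 => c • v) :=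
  ⟨hatAct_unbounded hw hl, hatAct_closed hl, exists_hatAct_hypercyclic hw hl,
    dense_hatAct_periodicPts hw hl, exists_hatAct_eigenspace_eq_range_smul hw hl⟩
end
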